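/- arXiv:1811.12850 — 7 statements merged into one kernel-verified Lean document; each statement's English description precedes it below -/
import Mathlib

section
/- Let j : ℝᴺ → [0,∞] be measurable, even, with 0 < ∫ min{1,|z|²} j(z) dz < ∞. Suppose δ > 0 is such that j_δ := j·1_{ℝᴺ∖B_δ} belongs to L¹(ℝᴺ) and is not a.e. zero, and set w_δ := j_δ / ‖j_δ‖_{L¹}. Then for every u ∈ 𝒟ʲ(ℝᴺ), ‖u − w_δ * u‖_{L²(ℝᴺ)} ≤ (2/‖j_δ‖_{L¹(ℝᴺ)})^{1/2} ‖u‖, where ‖u‖² = ℰ_j(u,u) + ‖u‖²_{L²}. -/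
open MeasureTheory ENNReal Filter Topology

noncomputable section

/-- N-dimensional Euclidean space. -/
abbrev Euc (N : ℕ) := EuclideanSpace ℝ (Fin N)

/-- The nonlocal quadratic form ℰ_j(u,u) = (1/2)∬ (u(x)-u(y))² j(x-y) dx dy. -/
def Ej {N : ℕ} (j : Euc N → ℝ≥0∞) (u : Euc N → ℝ) : ℝ≥0∞ :=
  (1/2 : ℝ≥0∞) * ∫⁻ p : Euc N × Euc N,
    ENNReal.ofReal ((u p.1 - u p.2)^2) * j (p.1 - p.2) ∂(volume.prod volume)

/-- The squared L² norm of u. -/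
def l2sq {N : ℕ} (u : Euc N → ℝ) : ℝ≥0∞ := ∫⁻ x, ENNReal.ofReal ((u x)^2)

/-- The squared norm of 𝒟ʲ(ℝᴺ): ‖u‖² = ℰ_j(u,u) + ‖u‖²_{L²}. -/
def DnormSq {N : ℕ} (j : Euc N → ℝ≥0∞) (u : Euc N → ℝ) : ℝ≥0∞ := Ej j u + l2sq u

/-- Membership in 𝒟ʲ(ℝᴺ) = {u ∈ L² : ℰ_j(u,u) < ∞}. -/
def MemDj {N : ℕ} (j : Euc N → ℝ≥0∞) (u : Euc N → ℝ) : Prop :=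
  MemLp u 2 (volume : Measure (Euc N)) ∧ Ej j u < ⊤

/-- Condition (A1): 0 < ∫ min{1,|z|²} j(z) dz < ∞ (evenness stated separately). -/
def CondA1 {N : ℕ} (j : Euc N → ℝ≥0∞) : Prop :=
  0 < ∫⁻ z, ENNReal.ofReal (min 1 (‖z‖^2)) * j z ∧
    (∫⁻ z, ENNReal.ofReal (min 1 (‖z‖^2)) * j z) < ⊤

/-- The kernel j cut off outside the ball of radius δ. -/
def jdelta {N : ℕ} (j : Euc N → ℝ≥0∞) (δ : ℝ) : Euc N → ℝ≥0∞ :=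
  fun z => if ‖z‖ < δ then 0 else j z

/-- The normalized weight w_δ = j_δ / ‖j_δ‖_{L¹}. -/
def wdelta {N : ℕ} (j : Euc N → ℝ≥0∞) (δ : ℝ) : Euc N → ℝ :=
  fun z => (jdelta j δ z / ∫⁻ y, jdelta j δ y).toReal

/-!
Since `w_δ` is a probability density, `u x - (w_δ * u) x = ∫ w_δ (x - y) (u x - u y) dy`, so by
Jensen's inequality its square is at most `∫ w_δ (x - y) (u x - u y)² dy`. Integrating in `x` and
using `j_δ ≤ j` bounds `‖u - w_δ * u‖²_{L²}` by `2 ℰ_j(u,u) / ‖j_δ‖_{L¹}`.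
-/

section Jensen

variable {α : Type*} [MeasurableSpace α] {μ : Measure α}

theorem ofReal_sq_sub_integral_le [IsProbabilityMeasure μ] {f : α → ℝ}
    (hf : AEStronglyMeasurable f μ) (c : ℝ) :
    ENNReal.ofReal ((c - ∫ a, f a ∂μ) ^ 2) ≤ ∫⁻ a, ENNReal.ofReal ((c - f a) ^ 2) ∂μ := by
  set g : α → ℝ := fun a => c - f a
  have hg : AEStronglyMeasurable g μ := aestronglyMeasurable_const.sub hf
  by_cases htop : ∫⁻ a, ENNReal.ofReal (g a ^ 2) ∂μ = ⊤
  · exact htop ▸ le_top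
  have hg2 : Integrable (fun a => g a ^ 2) μ :=
    ⟨hg.pow 2, (hasFiniteIntegral_iff_ofReal (ae_of_all _ fun a => sq_nonneg _)).2
      (lt_top_iff_ne_top.2 htop)⟩
  have hgL2 : MemLp g 2 μ := (memLp_two_iff_integrable_sq hg).2 hg2
  have hfi : Integrable f μ := by
    have := (integrable_const c).sub (hgL2.integrable one_le_two)
    simpa [g, Pi.sub_def] using this
  have hmean : c - ∫ a, f a ∂μ = ∫ a, g a ∂μ := by
    simp [g, integral_sub (integrable_const c) hfi]
  have hjensen : (∫ a, g a ∂μ) ^ 2 ≤ ∫ a, g a ^ 2 ∂μ := by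
    have := ProbabilityTheory.variance_nonneg g μ
    rw [ProbabilityTheory.variance_eq_sub hgL2] at this
    simpa using this
  rw [hmean, ← ofReal_integral_eq_lintegral_ofReal hg2 (ae_of_all _ fun a => sq_nonneg _)]
  exact ENNReal.ofReal_le_ofReal hjensen

theorem ofReal_sq_sub_integral_toReal_mul_le {p : α → ℝ≥0∞} (hp : Measurable p)
    (hp1 : ∫⁻ a, p a ∂μ = 1) {f : α → ℝ} (hf : AEStronglyMeasurable f μ) (c : ℝ) :
    ENNReal.ofReal ((c - ∫ a, (p a).toReal * f a ∂μ) ^ 2)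
      ≤ ∫⁻ a, p a * ENNReal.ofReal ((c - f a) ^ 2) ∂μ := by
  have : IsProbabilityMeasure (μ.withDensity p) := ⟨by simpa using hp1⟩
  have hp_lt_top : ∀ᵐ a ∂μ, p a < ⊤ := ae_lt_top hp (by simp [hp1])
  have h := ofReal_sq_sub_integral_le (hf.mono_ac (withDensity_absolutelyContinuous μ p)) c
  rwa [integral_withDensity_eq_integral_toReal_smul hp hp_lt_top,
    lintegral_withDensity_eq_lintegral_mul₀ hp.aemeasurable (by fun_prop)] at h

end Jensen

section Convolution

variable {G : Type*} [MeasurableSpace G] [AddGroup G] [MeasurableAdd₂ G] [MeasurableNeg G]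
  {μ : Measure G} [SFinite μ] [μ.IsAddLeftInvariant] [μ.IsNegInvariant]

theorem lintegral_ofReal_sq_sub_integral_le_lintegral_prod {W : G → ℝ≥0∞} (hW : Measurable W)
    (hW1 : ∫⁻ z, W z ∂μ = 1) {u : G → ℝ} (hu : AEStronglyMeasurable u μ) :
    ∫⁻ x, ENNReal.ofReal ((u x - ∫ y, (W (x - y)).toReal * u y ∂μ) ^ 2) ∂μ
      ≤ ∫⁻ p, ENNReal.ofReal ((u p.1 - u p.2) ^ 2) * W (p.1 - p.2) ∂μ.prod μ := by
  have hmeas : AEMeasurable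
      (fun p : G × G => ENNReal.ofReal ((u p.1 - u p.2) ^ 2) * W (p.1 - p.2)) (μ.prod μ) := by
    have h1 := hu.aemeasurable.comp_quasiMeasurePreserving
      (Measure.quasiMeasurePreserving_fst (μ := μ) (ν := μ))
    have h2 := hu.aemeasurable.comp_quasiMeasurePreserving
      (Measure.quasiMeasurePreserving_snd (μ := μ) (ν := μ))
    exact (ENNReal.measurable_ofReal.comp_aemeasurable ((h1.sub h2).pow_const 2)).mul
      (hW.comp (measurable_fst.sub measurable_snd)).aemeasurable
  rw [lintegral_prod _ hmeas]
  refine lintegral_mono fun x => ?_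
  simp_rw [mul_comm _ (W (x - _))]
  exact ofReal_sq_sub_integral_toReal_mul_le (hW.comp (measurable_const.sub measurable_id))
    ((lintegral_sub_left_eq_self W x).trans hW1) hu (u x)

end Convolution

theorem measurable_jdelta {N : ℕ} {j : Euc N → ℝ≥0∞} (hj : Measurable j) (δ : ℝ) :
    Measurable (jdelta j δ) :=
  Measurable.ite (measurableSet_lt measurable_norm measurable_const) measurable_const hj

theorem lintegral_sq_sub_mul_jdelta_le {N : ℕ} (j : Euc N → ℝ≥0∞) (δ : ℝ) (u : Euc N → ℝ) :
    ∫⁻ p : Euc N × Euc N, ENNReal.ofReal ((u p.1 - u p.2) ^ 2) * jdelta j δ (p.1 - p.2)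
      ∂(volume.prod volume) ≤ 2 * Ej j u := by
  rw [Ej, ← mul_assoc, ENNReal.mul_div_cancel two_ne_zero ofNat_ne_top, one_mul]
  gcongr with p
  unfold jdelta
  split_ifs <;> simp

theorem dist_to_weighted_average_general {N : ℕ} (j : Euc N → ℝ≥0∞) (hj : Measurable j)
    (δ : ℝ)
    (hfin : (∫⁻ y, jdelta j δ y) ≠ ⊤) (hpos : 0 < ∫⁻ y, jdelta j δ y)
    (u : Euc N → ℝ) (hu : MemDj j u) :
    (∫⁻ x, ENNReal.ofReal ((u x - ∫ y, wdelta j δ (x - y) * u y)^2))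
      ≤ (2 / ∫⁻ y, jdelta j δ y) * DnormSq j u := by
  set M := ∫⁻ y, jdelta j δ y
  have hM_inv : M⁻¹ ≠ ⊤ := ENNReal.inv_ne_top.2 hpos.ne'
  have hW1 : ∫⁻ z, jdelta j δ z / M = 1 := by
    simp_rw [div_eq_mul_inv]
    rw [lintegral_mul_const' _ _ hM_inv, ENNReal.mul_inv_cancel hpos.ne' hfin]
  calc (∫⁻ x, ENNReal.ofReal ((u x - ∫ y, wdelta j δ (x - y) * u y)^2))
      ≤ ∫⁻ p : Euc N × Euc N, ENNReal.ofReal ((u p.1 - u p.2) ^ 2) * (jdelta j δ (p.1 - p.2) / M)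
          ∂(volume.prod volume) :=
        lintegral_ofReal_sq_sub_integral_le_lintegral_prod
          ((measurable_jdelta hj δ).div_const M) hW1 hu.1.aestronglyMeasurable
    _ = (∫⁻ p : Euc N × Euc N, ENNReal.ofReal ((u p.1 - u p.2) ^ 2) * jdelta j δ (p.1 - p.2)
          ∂(volume.prod volume)) * M⁻¹ := by
        simp_rw [div_eq_mul_inv, ← mul_assoc]
        exact lintegral_mul_const' _ _ hM_inv
    _ ≤ 2 * Ej j u * M⁻¹ := by gcongr; exact lintegral_sq_sub_mul_jdelta_le j δ u
    _ ≤ 2 / M * DnormSq j u := by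
        rw [div_eq_mul_inv, mul_right_comm]
        gcongr
        exact le_self_add

/-- Estimate of the L²-distance of u to its weighted average:
    ‖u − w_δ * u‖²_{L²} ≤ (2/‖j_δ‖_{L¹}) ‖u‖². -/
theorem dist_to_weighted_average {N : ℕ} (j : Euc N → ℝ≥0∞) (hj : Measurable j)
    (heven : ∀ z, j (-z) = j z) (hA1 : CondA1 j)
    (δ : ℝ) (hδ : 0 < δ)
    (hfin : (∫⁻ y, jdelta j δ y) ≠ ⊤) (hpos : 0 < ∫⁻ y, jdelta j δ y)
    (u : Euc N → ℝ) (hu : MemDj j u) :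
    (∫⁻ x, ENNReal.ofReal ((u x - ∫ y, wdelta j δ (x - y) * u y)^2))
      ≤ (2 / ∫⁻ y, jdelta j δ y) * DnormSq j u :=
  dist_to_weighted_average_general j hj δ hfin hpos u hu
end
end

section
/- Let j : ℝᴺ → [0,∞] be measurable, even, with 0 < ∫ min{1,|z|²} j(z) dz < ∞. For a measurable set Ω ⊂ ℝᴺ with |Ω| < ∞ and any x ∈ ℝᴺ, the killing measure κ_Ω(x) = ∫_{ℝᴺ∖Ω} j(x−y) dy satisfies κ_Ω(x) ≥ κ(|Ω|), where κ(r) := ∫_{{j < d_j(r)}} j(z) dz + d_j(r)·(|{j ≥ d_j(r)}| − r) and d_j is the decreasing rearrangement of j. -/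
open MeasureTheory ENNReal Filter Topology

noncomputable section

/-- The decreasing rearrangement d_j(r) = inf{c ≥ 0 : |{j > c}| ≤ r}. -/
def decRearr {N : ℕ} (j : Euc N → ℝ≥0∞) (r : ℝ≥0∞) : ℝ≥0∞ :=
  sInf {c : ℝ≥0∞ | volume {x : Euc N | c < j x} ≤ r}

/-- The killing measure κ_Ω(x) = ∫_{ℝᴺ∖Ω} j(x−y) dy. -/
def kappaSet {N : ℕ} (j : Euc N → ℝ≥0∞) (Ω : Set (Euc N)) (x : Euc N) : ℝ≥0∞ :=
  ∫⁻ y in Ωᶜ, j (x - y)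

/-- κ(r) = ∫_{{j < d_j(r)}} j dz + d_j(r)(|{j ≥ d_j(r)}| − r). -/
def kappaFun {N : ℕ} (j : Euc N → ℝ≥0∞) (r : ℝ≥0∞) : ℝ≥0∞ :=
  (∫⁻ z in {z : Euc N | j z < decRearr j r}, j z) +
    decRearr j r * (volume {z : Euc N | decRearr j r ≤ j z} - r)

/-!
Translating by `x` turns `κ_Ω(x)` into `∫_{Aᶜ} j` with `A = x - Ω` and `|A| = |Ω|`. Put
`d = d_j(|A|)`. If `d = 0`, in particular if `|A| = ∞`, then `κ(|A|) = 0`. Otherwise the superlevel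
sets `{j > c}`, `c > 0`, have finite measure by the integrability condition, so continuity from above
gives `|A| ≤ |{j ≥ d}|`. The bathtub principle finishes: `j < d` on `A ∖ {j ≥ d}` and `j ≥ d` on
`{j ≥ d} ∖ A`, and the second set is at least as large as the first.
-/

open Set

theorem setLIntegral_lt_add_mul_measure_sub_le_setLIntegral_compl {α : Type*}
    [MeasurableSpace α] {μ : Measure α} {f : α → ℝ≥0∞} {A : Set α} {d : ℝ≥0∞} (hf : Measurable f)
    (hA : MeasurableSet A) (hAfin : μ A ≠ ⊤) (hAd : μ A ≤ μ {x | d ≤ f x}) :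
    ∫⁻ x in {x | f x < d}, f x ∂μ + d * (μ {x | d ≤ f x} - μ A) ≤ ∫⁻ x in Aᶜ, f x ∂μ := by
  set T := {x | d ≤ f x}
  have hT : MeasurableSet T := measurableSet_le measurable_const hf
  have hTc : {x | f x < d} = Tᶜ := by ext; simp [T]
  have hA_split : μ (A ∩ T) + μ (A \ T) = μ A := measure_inter_add_sdiff A hT
  have hT_split : μ (A ∩ T) + μ (T \ A) = μ T := by
    rw [inter_comm]; exact measure_inter_add_sdiff T hA
  have hAT_fin : μ (A ∩ T) ≠ ⊤ := measure_ne_top_of_subset inter_subset_left hAfin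
  have hgap : μ T - μ A = μ (T \ A) - μ (A \ T) := by
    rw [← hA_split, ← hT_split, ENNReal.add_sub_add_eq_sub_left hAT_fin]
  have hle : μ (A \ T) ≤ μ (T \ A) := by
    rwa [← hA_split, ← hT_split, ENNReal.add_le_add_iff_left hAT_fin] at hAd
  have hlow : ∫⁻ x in A \ T, f x ∂μ ≤ d * μ (A \ T) := by
    rw [← setLIntegral_const]
    exact setLIntegral_mono' (hA.diff hT) fun x hx => (not_le.mp hx.2).le
  have hhigh : d * μ (T \ A) ≤ ∫⁻ x in T \ A, f x ∂μ := by
    rw [← setLIntegral_const]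
    exact setLIntegral_mono' (hT.diff hA) fun x hx => hx.1
  have hAc_split : ∫⁻ x in Tᶜ \ A, f x ∂μ + ∫⁻ x in T \ A, f x ∂μ = ∫⁻ x in Aᶜ, f x ∂μ := by
    rw [add_comm, ← lintegral_inter_add_sdiff f Aᶜ hT, sdiff_eq_compl_inter, sdiff_eq_compl_inter,
      inter_comm, sdiff_eq_compl_inter, inter_comm Aᶜ]
  calc ∫⁻ x in {x | f x < d}, f x ∂μ + d * (μ T - μ A)
      = ∫⁻ x in A \ T, f x ∂μ + ∫⁻ x in Tᶜ \ A, f x ∂μ + d * (μ (T \ A) - μ (A \ T)) := by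
        rw [hTc, ← lintegral_inter_add_sdiff f Tᶜ hA, ← sdiff_eq_compl_inter, hgap]
    _ ≤ d * μ (A \ T) + ∫⁻ x in Tᶜ \ A, f x ∂μ + d * (μ (T \ A) - μ (A \ T)) := by gcongr
    _ = ∫⁻ x in Tᶜ \ A, f x ∂μ + d * μ (T \ A) := by
        rw [add_right_comm, ← mul_add, add_tsub_cancel_of_le hle, add_comm]
    _ ≤ ∫⁻ x in Aᶜ, f x ∂μ := hAc_split ▸ add_le_add_right hhigh _

theorem measure_lt_ne_top_of_lintegral_min_one_sq_mul_lt_top {E : Type*} [NormedAddCommGroup E]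
    [MeasurableSpace E] [BorelSpace E] [ProperSpace E] {μ : Measure E}
    [IsFiniteMeasureOnCompacts μ] {j : E → ℝ≥0∞} (hj : Measurable j)
    (hfin : ∫⁻ z, ENNReal.ofReal (min 1 (‖z‖ ^ 2)) * j z ∂μ < ⊤) {c : ℝ≥0∞} (hc : c ≠ 0) :
    μ {z | c < j z} ≠ ⊤ := by
  set g := fun z => ENNReal.ofReal (min 1 (‖z‖ ^ 2)) * j z
  have hsub : {z | c < j z} ⊆ Metric.ball 0 1 ∪ {z | c ≤ g z} := by
    intro z (hz : c < j z)
    by_cases hz1 : ‖z‖ < 1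
    · exact Or.inl (mem_ball_zero_iff.mpr hz1)
    · have hmin : min 1 (‖z‖ ^ 2) = 1 := min_eq_left (by nlinarith)
      refine Or.inr (show c ≤ g z from ?_)
      simpa only [g, hmin, ENNReal.ofReal_one, one_mul] using hz.le
  have hmarkov : c * μ {z | c ≤ g z} < ⊤ :=
    (mul_meas_ge_le_lintegral (by fun_prop) c).trans_lt hfin
  have hg_fin : μ {z | c ≤ g z} < ⊤ := by
    rcases ENNReal.mul_lt_top_iff.mp hmarkov with h | h | h
    exacts [h.2, absurd h hc, h ▸ ENNReal.zero_lt_top]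
  exact measure_ne_top_of_subset hsub
    ((measure_union_le _ _).trans_lt (ENNReal.add_lt_top.mpr ⟨measure_ball_lt_top, hg_fin⟩)).ne

section DecreasingRearrangement

variable {N : ℕ} {j : Euc N → ℝ≥0∞} {r : ℝ≥0∞}

theorem lt_volume_of_lt_decRearr {c : ℝ≥0∞} (h : c < decRearr j r) :
    r < volume {z | c < j z} :=
  lt_of_not_ge fun hle => (sInf_le hle : decRearr j r ≤ c).not_gt h

theorem le_volume_decRearr_le (hj : Measurable j)
    (hfin : ∀ c ≠ 0, volume {z | c < j z} ≠ ⊤) (hd : decRearr j r ≠ 0) :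
    r ≤ volume {z | decRearr j r ≤ j z} := by
  obtain ⟨u, hu_mono, hu_mem, hu_lim⟩ := exists_seq_strictMono_tendsto' (pos_iff_ne_zero.mpr hd)
  have hlevel : {z | decRearr j r ≤ j z} = ⋂ n, {z | u n < j z} := by
    ext z
    simp only [mem_iInter, mem_ofPred_eq]
    exact ⟨fun h n => (hu_mem n).2.trans_le h,
      fun h => le_of_tendsto' hu_lim fun n => (h n).le⟩
  have hanti : Antitone fun n => {z | u n < j z} :=
    fun m n hmn z hz => (hu_mono.monotone hmn).trans_lt hz
  rw [hlevel, hanti.measure_iInter (fun n => (measurableSet_lt measurable_const hj).nullMeasurableSet)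
    ⟨0, hfin _ (hu_mem 0).1.ne'⟩]
  exact le_iInf fun n => (lt_volume_of_lt_decRearr (hu_mem n).2).le

theorem kappaFun_volume_le_setLIntegral_compl (hj : Measurable j)
    (hfin : ∀ c ≠ 0, volume {z | c < j z} ≠ ⊤) {A : Set (Euc N)} (hA : MeasurableSet A) :
    kappaFun j (volume A) ≤ ∫⁻ z in Aᶜ, j z := by
  by_cases hd : decRearr j (volume A) = 0
  · simp [kappaFun, hd]
  have hAfin : volume A ≠ ⊤ := (lt_volume_of_lt_decRearr (pos_iff_ne_zero.mpr hd)).ne_top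
  exact setLIntegral_lt_add_mul_measure_sub_le_setLIntegral_compl hj hA hAfin
    (le_volume_decRearr_le hj hfin hd)

end DecreasingRearrangement

theorem killing_measure_lower_bound_general {N : ℕ} (j : Euc N → ℝ≥0∞) (hj : Measurable j)
    (hA1 : CondA1 j)
    (Ω : Set (Euc N)) (hΩ : MeasurableSet Ω) (x : Euc N) :
    kappaFun j (volume Ω) ≤ kappaSet j Ω x := by
  have hT := Measure.measurePreserving_sub_left (volume : Measure (Euc N)) x
  set A := (fun y => x - y) ⁻¹' Ω
  have hΩc : Ωᶜ = (fun y => x - y) ⁻¹' Aᶜ := by ext y; simp [A]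
  have hkappa : kappaSet j Ω x = ∫⁻ z in Aᶜ, j z := by
    rw [kappaSet, hΩc]
    exact hT.setLIntegral_comp_preimage_emb (MeasurableEquiv.subLeft x).measurableEmbedding j Aᶜ
  rw [hkappa, ← hT.measure_preimage hΩ.nullMeasurableSet]
  exact kappaFun_volume_le_setLIntegral_compl hj
    (fun c hc => measure_lt_ne_top_of_lintegral_min_one_sq_mul_lt_top hj hA1.2 hc)
    (hΩ.preimage hT.measurable)

/-- Lower estimate for the killing measure: κ_Ω(x) ≥ κ(|Ω|). -/
theorem killing_measure_lower_bound {N : ℕ} (j : Euc N → ℝ≥0∞) (hj : Measurable j)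
    (heven : ∀ z, j (-z) = j z) (hA1 : CondA1 j)
    (Ω : Set (Euc N)) (hΩ : MeasurableSet Ω) (hΩfin : volume Ω ≠ ⊤) (x : Euc N) :
    kappaFun j (volume Ω) ≤ kappaSet j Ω x :=
  killing_measure_lower_bound_general j hj hA1 Ω hΩ x
end
end

section
/- Let j : ℝᴺ → [0,∞] be measurable, even, with 0 < ∫ min{1,|z|²} j(z) dz < ∞ and ∫_{ℝᴺ} j(z) dz = ∞. Then κ(r) → ∞ as r → 0⁺, where κ(r) = ∫_{{j < d_j(r)}} j(z) dz + d_j(r)(|{j ≥ d_j(r)}| − r) and d_j is the decreasing rearrangement of j. -/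
/-!
If `j ≤ c` almost everywhere for some finite `c`, then `∫ j` is at most `c |B₁|` plus the tail
`∫_{B₁ᶜ} j ≤ ∫ min{1,|z|²} j`, which is finite; so `∫ j = ∞` forces every superlevel set `{j > c}`
to have positive measure, and therefore `d_j(r) → ∞` as `r → 0⁺`. If `j` is finite a.e., monotone
convergence gives `∫_{{j < c}} j → ∫ j = ∞` as `c → ∞`, and this integral at `c = d_j(r)` is a lower
bound for `κ(r)`. If instead `j = ∞` on a set of measure `m > 0`, then `d_j(r) = ∞` for `r < m`
and the second term of `κ(r)` is already infinite.
-/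

open MeasureTheory ENNReal Filter Topology

noncomputable section

section Truncation

variable {α : Type*} [MeasurableSpace α] {μ : Measure α} {f : α → ℝ≥0∞}

theorem iSup_setLIntegral_lt_natCast (hf : Measurable f) (hfin : ∀ᵐ x ∂μ, f x < ⊤) :
    ⨆ n : ℕ, ∫⁻ x in {x | f x < n}, f x ∂μ = ∫⁻ x, f x ∂μ := by
  have hmeas (c : ℝ≥0∞) : MeasurableSet {x | f x < c} := measurableSet_lt hf measurable_const
  have hmono : Monotone fun n : ℕ => {x | f x < n} := fun m n hmn x hx =>
    (show f x < m from hx).trans_le (Nat.cast_le.2 hmn)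
  have hunion : ⋃ n : ℕ, {x | f x < n} = {x | f x < ⊤} := by
    ext x
    simp only [Set.mem_iUnion, Set.mem_ofPred_eq]
    exact ⟨fun ⟨n, hn⟩ => hn.trans (natCast_lt_top n), fun h => ENNReal.exists_nat_gt h.ne⟩
  calc ⨆ n : ℕ, ∫⁻ x in {x | f x < n}, f x ∂μ
      = ⨆ n : ℕ, μ.withDensity f {x | f x < n} := by simp only [withDensity_apply f (hmeas _)]
    _ = ∫⁻ x in {x | f x < ⊤}, f x ∂μ := by
      rw [← hmono.measure_iUnion, hunion, withDensity_apply f (hmeas ⊤)]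
    _ = ∫⁻ x, f x ∂μ := by rw [Measure.restrict_eq_self_of_ae_mem (s := {x | f x < ⊤}) hfin]

theorem tendsto_setLIntegral_lt_nhds_top (hf : Measurable f) (hfin : ∀ᵐ x ∂μ, f x < ⊤)
    (htop : ∫⁻ x, f x ∂μ = ⊤) :
    Tendsto (fun c => ∫⁻ x in {x | f x < c}, f x ∂μ) (𝓝 ⊤) (𝓝 ⊤) := by
  refine ENNReal.tendsto_nhds_top_iff_nat.2 fun n => ?_
  obtain ⟨m, hm⟩ : ∃ m : ℕ, (n : ℝ≥0∞) < ∫⁻ x in {x | f x < m}, f x ∂μ := by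
    rw [← lt_iSup_iff, iSup_setLIntegral_lt_natCast hf hfin, htop]
    exact natCast_lt_top n
  filter_upwards [Ioi_mem_nhds (natCast_lt_top m)] with c hc
  exact hm.trans_le (lintegral_mono_set fun x (hx : f x < m) => hx.trans hc)

end Truncation

section Tail

variable {E : Type*} [SeminormedAddCommGroup E] [MeasurableSpace E] [OpensMeasurableSpace E]
  {μ : Measure E}

theorem setLIntegral_compl_ball_le (j : E → ℝ≥0∞) :
    ∫⁻ z in (Metric.ball 0 1)ᶜ, j z ∂μ ≤ ∫⁻ z, ENNReal.ofReal (min 1 (‖z‖ ^ 2)) * j z ∂μ := by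
  refine le_trans (le_of_eq ?_) (setLIntegral_le_lintegral (Metric.ball 0 1)ᶜ _)
  refine setLIntegral_congr_fun Metric.isOpen_ball.measurableSet.compl fun z hz => ?_
  have hz1 : 1 ≤ ‖z‖ := by simpa using hz
  rw [min_eq_left (one_le_pow₀ hz1), ENNReal.ofReal_one, one_mul]

theorem lintegral_lt_top_of_ae_le [ProperSpace E] [IsFiniteMeasureOnCompacts μ]
    {j : E → ℝ≥0∞} {c : ℝ≥0∞} (hc : c ≠ ⊤) (hjc : ∀ᵐ z ∂μ, j z ≤ c)
    (htail : ∫⁻ z, ENNReal.ofReal (min 1 (‖z‖ ^ 2)) * j z ∂μ < ⊤) :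
    ∫⁻ z, j z ∂μ < ⊤ := by
  rw [← lintegral_add_compl j (Metric.isOpen_ball (x := (0 : E)) (ε := 1)).measurableSet]
  refine ENNReal.add_lt_top.2 ⟨?_, (setLIntegral_compl_ball_le j).trans_lt htail⟩
  calc ∫⁻ z in Metric.ball 0 1, j z ∂μ ≤ ∫⁻ _ in Metric.ball 0 1, c ∂μ :=
        lintegral_mono_ae (ae_restrict_of_ae hjc)
    _ = c * μ (Metric.ball 0 1) := setLIntegral_const _ _
    _ < ⊤ := ENNReal.mul_lt_top hc.lt_top measure_ball_lt_top

end Tail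

section Rearrangement

variable {N : ℕ} {j : Euc N → ℝ≥0∞} {r : ℝ≥0∞}

theorem le_decRearr_of_lt_measure {c : ℝ≥0∞} (h : r < volume {x | c < j x}) :
    c ≤ decRearr j r :=
  le_sInf fun _ hb => not_lt.1 fun hbc =>
    (h.trans_le (measure_mono fun x (hx : c < j x) => hbc.trans hx)).not_ge hb

theorem tendsto_decRearr_nhdsGT_zero (hpos : ∀ c ≠ ⊤, 0 < volume {x | c < j x}) :
    Tendsto (decRearr j) (𝓝[>] 0) (𝓝 ⊤) := by
  refine ENNReal.tendsto_nhds_top_iff_nat.2 fun n => ?_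
  filter_upwards [nhdsWithin_le_nhds (Iio_mem_nhds (hpos (n + 1 : ℕ) (natCast_ne_top _)))]
    with r hr
  exact (Nat.cast_lt.2 n.lt_succ_self).trans_le (le_decRearr_of_lt_measure hr)

theorem kappaFun_eq_top_of_lt_measure (h : r < volume {x | j x = ⊤}) : kappaFun j r = ⊤ := by
  have hd : decRearr j r = ⊤ := eq_top_of_forall_nnreal_le fun c =>
    le_decRearr_of_lt_measure (h.trans_le (measure_mono fun x (hx : j x = ⊤) =>
      show (c : ℝ≥0∞) < j x from hx ▸ coe_lt_top))
  simp only [kappaFun, hd, top_le_iff]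
  rw [top_mul (tsub_pos_of_lt h).ne', add_top]

theorem tendsto_kappaFun_nhdsGT_zero (hj : Measurable j) (htop : ∫⁻ z, j z = ⊤)
    (hpos : ∀ c ≠ ⊤, 0 < volume {x | c < j x}) :
    Tendsto (kappaFun j) (𝓝[>] 0) (𝓝 ⊤) := by
  by_cases hfin : volume {x | j x = ⊤} = 0
  · have hfin_ae : ∀ᵐ z, j z < ⊤ := by simpa [ae_iff] using hfin
    refine tendsto_nhds_top_mono ((tendsto_setLIntegral_lt_nhds_top hj hfin_ae htop).comp
      (tendsto_decRearr_nhdsGT_zero hpos)) (Eventually.of_forall fun _ => le_self_add)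
  · refine tendsto_const_nhds.congr' ?_
    filter_upwards [nhdsWithin_le_nhds (Iio_mem_nhds (pos_iff_ne_zero.2 hfin))] with r hr
    exact (kappaFun_eq_top_of_lt_measure hr).symm

end Rearrangement

theorem kappaFun_tendsto_top_general {N : ℕ} (j : Euc N → ℝ≥0∞) (hj : Measurable j)
    (hA1 : CondA1 j) (hA2 : (∫⁻ z, j z) = ⊤) :
    Tendsto (kappaFun j) (𝓝[>] (0 : ℝ≥0∞)) (𝓝 ⊤) := by
  refine tendsto_kappaFun_nhdsGT_zero hj hA2 fun c hc => pos_iff_ne_zero.2 fun hnull => ?_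
  have hjc : ∀ᵐ z, j z ≤ c := by simpa [ae_iff] using hnull
  exact (lintegral_lt_top_of_ae_le hc hjc hA1.2).ne hA2

/-- If j satisfies (A1) and ∫ j = ∞, then κ(r) → ∞ as r → 0⁺. -/
theorem kappaFun_tendsto_top {N : ℕ} (j : Euc N → ℝ≥0∞) (hj : Measurable j)
    (heven : ∀ z, j (-z) = j z) (hA1 : CondA1 j)
    (hA2 : (∫⁻ z, j z) = ⊤) :
    Tendsto (kappaFun j) (𝓝[>] (0 : ℝ≥0∞)) (𝓝 ⊤) :=
  kappaFun_tendsto_top_general j hj hA1 hA2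
end
end

section
/- Let j : ℝᴺ → [0,∞] be measurable and even with ∫ min{1,|z|²} j(z) dz < ∞. For t > 0 and u ∈ 𝒟ʲ(ℝᴺ), let Ω_{u,t} = {x : |u(x)| > t} and let P_t u be the pointwise truncation of u at level t. Then ‖u − P_t u‖²_{L²(ℝᴺ)} · inf_{x ∈ Ω_{u,t}} κ_{Ω_{u,t}}(x) ≤ ‖u‖², where κ_Ω(x) = ∫_{ℝᴺ∖Ω} j(x−y) dy and ‖u‖² = ℰ_j(u,u) + ‖u‖²_{L²}. -/
open MeasureTheory ENNReal Filter Topology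

noncomputable section

/-- The truncation P_t u at level t. -/
def trunc {N : ℕ} (t : ℝ) (u : Euc N → ℝ) : Euc N → ℝ :=
  fun x => max (-t) (min t (u x))

/-! For `x ∈ Ω = {|u| > t}` and `y ∉ Ω` the truncation error satisfies
`|u x - P_t u x| = |u x| - t ≤ |u x - u y|`. Multiplying by `j (x - y)` and integrating over
`Ω × Ωᶜ` bounds the left-hand side by `∬_{Ω × Ωᶜ} (u x - u y)² j (x - y)`. Since `j` is even, this
integral equals the one over `Ωᶜ × Ω`, so twice it is at most the full double integral `2 ℰ_j(u,u)`.
-/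
theorem max_neg_min_eq_self {t a : ℝ} (ha : |a| ≤ t) : max (-t) (min t a) = a := by
  obtain ⟨h₁, h₂⟩ := abs_le.mp ha
  rw [min_eq_right h₂, max_eq_right h₁]

theorem sq_sub_max_neg_min_le {t a b : ℝ} (ha : t < |a|) (hb : |b| ≤ t) :
    (a - max (-t) (min t a)) ^ 2 ≤ (a - b) ^ 2 := by
  obtain ⟨hb₁, hb₂⟩ := abs_le.mp hb
  rcases lt_abs.mp ha with h | h
  · rw [min_eq_left h.le, max_eq_right (by linarith)]
    nlinarith
  · rw [min_eq_right (by linarith), max_eq_left (by linarith)]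
    nlinarith

section

variable {α : Type*} [MeasurableSpace α] {μ : Measure α} {s : Set α}

theorem two_mul_setLIntegral_prod_compl_le [SFinite μ] {F : α × α → ℝ≥0∞}
    (hF : ∀ p, F p.swap = F p) (hs : NullMeasurableSet s μ) :
    2 * ∫⁻ p in s ×ˢ sᶜ, F p ∂μ.prod μ ≤ ∫⁻ p, F p ∂μ.prod μ := by
  have hswap : ∫⁻ p in sᶜ ×ˢ s, F p ∂μ.prod μ = ∫⁻ p in s ×ˢ sᶜ, F p ∂μ.prod μ := by
    rw [← Measure.measurePreserving_swap.setLIntegral_comp_preimage_emb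
      MeasurableEquiv.prodComm.measurableEmbedding, Set.preimage_swap_prod]
    simp only [hF]
  have hdisj : AEDisjoint (μ.prod μ) (s ×ˢ sᶜ) (sᶜ ×ˢ s) :=
    (Set.disjoint_prod.mpr (Or.inl disjoint_compl_right)).aedisjoint
  calc 2 * ∫⁻ p in s ×ˢ sᶜ, F p ∂μ.prod μ
      = ∫⁻ p in s ×ˢ sᶜ ∪ sᶜ ×ˢ s, F p ∂μ.prod μ := by
        rw [Measure.restrict_union₀ hdisj (hs.compl.prod hs), lintegral_add_measure, hswap,
          two_mul]
    _ ≤ ∫⁻ p, F p ∂μ.prod μ := setLIntegral_le_lintegral _ _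

theorem lintegral_mul_iInf_le_setLIntegral_compl {g : α → ℝ≥0∞} {K : α → α → ℝ≥0∞}
    (hg : ∀ x ∉ s, g x = 0) :
    (∫⁻ x, g x ∂μ) * (⨅ x ∈ s, ∫⁻ y in sᶜ, K x y ∂μ)
      ≤ ∫⁻ x in s, ∫⁻ y in sᶜ, g x * K x y ∂μ ∂μ := by
  set c := ⨅ x ∈ s, ∫⁻ y in sᶜ, K x y ∂μ
  have hsupp : (fun x ↦ g x * ∫⁻ y in sᶜ, K x y ∂μ).support ⊆ s := fun x hx ↦ by
    by_contra h
    simp [hg x h] at hx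
  calc (∫⁻ x, g x ∂μ) * c
      ≤ ∫⁻ x, g x * c ∂μ := lintegral_mul_const_le _ _
    _ ≤ ∫⁻ x, g x * ∫⁻ y in sᶜ, K x y ∂μ ∂μ := lintegral_mono fun x ↦ by
        by_cases hx : x ∈ s
        · exact mul_le_mul_right (biInf_le _ hx) _
        · simp [hg x hx]
    _ = ∫⁻ x in s, g x * ∫⁻ y in sᶜ, K x y ∂μ ∂μ := (setLIntegral_eq_of_support_subset hsupp).symm
    _ ≤ ∫⁻ x in s, ∫⁻ y in sᶜ, g x * K x y ∂μ ∂μ :=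
        lintegral_mono fun x ↦ lintegral_const_mul_le _ _

end

section

variable {α : Type*} [MeasurableSpace α] [AddGroup α] [MeasurableSub₂ α] {μ : Measure α}
  [SFinite μ]

theorem lintegral_sq_sub_max_neg_min_mul_iInf_le {j : α → ℝ≥0∞} (hj : Measurable j)
    (hj_even : ∀ z, j (-z) = j z) {u : α → ℝ} (hu : AEMeasurable u μ) (t : ℝ) :
    (∫⁻ x, ENNReal.ofReal ((u x - max (-t) (min t (u x))) ^ 2) ∂μ) *
      (⨅ x ∈ {x | t < |u x|}, ∫⁻ y in {x | t < |u x|}ᶜ, j (x - y) ∂μ)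
      ≤ 1 / 2 * ∫⁻ p, ENNReal.ofReal ((u p.1 - u p.2) ^ 2) * j (p.1 - p.2) ∂μ.prod μ := by
  set W := {x | t < |u x|}
  set F : α × α → ℝ≥0∞ := fun p ↦ ENNReal.ofReal ((u p.1 - u p.2) ^ 2) * j (p.1 - p.2)
  have hW : NullMeasurableSet W μ := nullMeasurableSet_lt aemeasurable_const hu.abs
  have hF : AEMeasurable F (μ.prod μ) :=
    (ENNReal.measurable_ofReal.comp_aemeasurable ((hu.comp_fst.sub hu.comp_snd).pow_const 2)).mul
      (hj.comp measurable_sub).aemeasurable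
  have hF_swap (p : α × α) : F p.swap = F p := by
    simp only [F, Prod.fst_swap, Prod.snd_swap, ← neg_sub p.1, ← neg_sub (u p.1), hj_even, neg_sq]
  have hg (x : α) (hx : x ∉ W) : ENNReal.ofReal ((u x - max (-t) (min t (u x))) ^ 2) = 0 := by
    simp [max_neg_min_eq_self (not_lt.mp hx)]
  have hgF : ∀ x ∈ W, ∀ y ∉ W,
      ENNReal.ofReal ((u x - max (-t) (min t (u x))) ^ 2) * j (x - y) ≤ F (x, y) :=
    fun x hx y hy ↦ mul_le_mul_left
      (ENNReal.ofReal_le_ofReal (sq_sub_max_neg_min_le hx (not_lt.mp hy))) _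
  calc _ ≤ ∫⁻ x in W, ∫⁻ y in Wᶜ,
          ENNReal.ofReal ((u x - max (-t) (min t (u x))) ^ 2) * j (x - y) ∂μ ∂μ :=
        lintegral_mul_iInf_le_setLIntegral_compl hg
    _ ≤ ∫⁻ x in W, ∫⁻ y in Wᶜ, F (x, y) ∂μ ∂μ := by
        refine lintegral_mono_ae ((ae_restrict_mem₀ hW).mono fun x hx ↦ ?_)
        exact lintegral_mono_ae ((ae_restrict_mem₀ hW.compl).mono (hgF x hx))
    _ = ∫⁻ p in W ×ˢ Wᶜ, F p ∂μ.prod μ := (setLIntegral_prod F hF.restrict).symm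
    _ ≤ 1 / 2 * ∫⁻ p, F p ∂μ.prod μ := by
        rw [one_div, ← ENNReal.div_eq_inv_mul, ENNReal.le_div_iff_mul_le (by simp) (by simp),
          mul_comm]
        exact two_mul_setLIntegral_prod_compl_le hF_swap hW

end

theorem trunc_dist_killing_bound_general {N : ℕ} (j : Euc N → ℝ≥0∞) (hj : Measurable j)
    (heven : ∀ z, j (-z) = j z)
    (t : ℝ) (u : Euc N → ℝ) (hu : MemDj j u) :
    (∫⁻ x, ENNReal.ofReal ((u x - trunc t u x)^2)) *
      (⨅ x ∈ {x : Euc N | t < |u x|}, kappaSet j {x : Euc N | t < |u x|} x)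
      ≤ DnormSq j u :=
  (lintegral_sq_sub_max_neg_min_mul_iInf_le hj heven hu.1.aemeasurable t).trans le_self_add

/-- ‖u − P_t u‖²_{L²} · inf_{x ∈ Ω_{u,t}} κ_{Ω_{u,t}}(x) ≤ ‖u‖². -/
theorem trunc_dist_killing_bound {N : ℕ} (j : Euc N → ℝ≥0∞) (hj : Measurable j)
    (heven : ∀ z, j (-z) = j z)
    (hA1fin : (∫⁻ z, ENNReal.ofReal (min 1 (‖z‖^2)) * j z) ≠ ⊤)
    (t : ℝ) (ht : 0 < t) (u : Euc N → ℝ) (hu : MemDj j u) :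
    (∫⁻ x, ENNReal.ofReal ((u x - trunc t u x)^2)) *
      (⨅ x ∈ {x : Euc N | t < |u x|}, kappaSet j {x : Euc N | t < |u x|} x)
      ≤ DnormSq j u :=
  trunc_dist_killing_bound_general j hj heven t u hu
end
end

section
/- Let j : ℝᴺ → [0,∞] be measurable, even, with 0 < ∫ min{1,|z|²} j(z) dz < ∞. Then functions with bounded support are dense in 𝒟ʲ(ℝᴺ): for every u ∈ 𝒟ʲ(ℝᴺ) and ε > 0 there exists v ∈ 𝒟ʲ(ℝᴺ) with bounded support such that ‖u − v‖ < ε. In fact one may take v = u·φ_R for a Lipschitz cutoff φ_R with sufficiently large R. -/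
open MeasureTheory ENNReal Filter Topology

noncomputable section

/-! ### Auxiliary lemmas -/

/-- The Lipschitz cutoff function φ_n. -/
def cutoff {N : ℕ} (n : ℕ) (x : Euc N) : ℝ := min 1 (max 0 (2 - ‖x‖ / n))

lemma cutoff_nonneg {N : ℕ} (n : ℕ) (x : Euc N) : 0 ≤ cutoff n x := by
  unfold cutoff; simp [le_min_iff]

lemma cutoff_le_one {N : ℕ} (n : ℕ) (x : Euc N) : cutoff n x ≤ 1 := min_le_left _ _

lemma cutoff_eq_one {N : ℕ} {n : ℕ} {x : Euc N} (hx : ‖x‖ ≤ n) : cutoff n x = 1 := by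
  have hd : ‖x‖ / (n : ℝ) ≤ 1 := by
    rcases eq_or_lt_of_le (Nat.cast_nonneg (α := ℝ) n) with h | h
    · simp [← h]
    · exact (div_le_one h).2 hx
  unfold cutoff
  rw [min_eq_left]
  rw [le_max_iff]; right; linarith

lemma cutoff_eq_zero {N : ℕ} {n : ℕ} {x : Euc N} (hn : 1 ≤ n) (hx : 2 * n ≤ ‖x‖) :
    cutoff n x = 0 := by
  have hnpos : (0:ℝ) < n := by exact_mod_cast hn
  have h : 2 - ‖x‖ / n ≤ 0 := by
    rw [sub_nonpos, le_div_iff₀ hnpos]; linarith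
  unfold cutoff
  rw [max_eq_left h, min_eq_right zero_le_one]

lemma cutoff_lip {N : ℕ} {n : ℕ} (hn : 1 ≤ n) (x y : Euc N) :
    |cutoff n x - cutoff n y| ≤ ‖x - y‖ / n := by
  have hnpos : (0:ℝ) < n := by exact_mod_cast hn
  have h1 : |cutoff n x - cutoff n y| ≤ |(2 - ‖x‖ / n) - (2 - ‖y‖ / n)| := by
    calc |cutoff n x - cutoff n y|
        ≤ max |(1:ℝ)-1| |max 0 (2 - ‖x‖ / n) - max 0 (2 - ‖y‖ / n)| :=
          abs_min_sub_min_le_max _ _ _ _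
      _ ≤ |(2 - ‖x‖ / n) - (2 - ‖y‖ / n)| := by
          simp only [sub_self, abs_zero, max_le_iff]
          refine ⟨abs_nonneg _, ?_⟩
          calc |max 0 (2 - ‖x‖ / n) - max 0 (2 - ‖y‖ / n)|
              ≤ max |(0:ℝ)-0| |(2 - ‖x‖ / n) - (2 - ‖y‖ / n)| := abs_max_sub_max_le_max _ _ _ _
            _ ≤ _ := by simp
  have h2 : |(2 - ‖x‖ / n) - (2 - ‖y‖ / n)| = |‖x‖ - ‖y‖| / n := by
    rw [show (2 - ‖x‖ / n) - (2 - ‖y‖ / n) = (‖y‖ - ‖x‖) / n by ring, abs_div,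
      abs_of_pos hnpos, abs_sub_comm]
  refine h1.trans ?_
  rw [h2]
  exact (div_le_div_iff_of_pos_right hnpos).2 (abs_norm_sub_norm_le x y)

lemma cutoff_sq_diff {N : ℕ} {n : ℕ} (hn : 1 ≤ n) (x y : Euc N) :
    (cutoff n x - cutoff n y)^2 ≤ min 1 (‖x - y‖^2 / (n:ℝ)^2) := by
  have hnpos : (0:ℝ) < n := by exact_mod_cast hn
  have habs := cutoff_lip hn x y
  refine le_min ?_ ?_
  · have h1 : |cutoff n x - cutoff n y| ≤ 1 := by
      rw [abs_le]
      constructor <;> nlinarith [cutoff_nonneg n x, cutoff_nonneg n y,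
        cutoff_le_one n x, cutoff_le_one n y]
    calc (cutoff n x - cutoff n y)^2 = |cutoff n x - cutoff n y|^2 := (sq_abs _).symm
      _ ≤ 1 := by nlinarith [abs_nonneg (cutoff n x - cutoff n y)]
  · calc (cutoff n x - cutoff n y)^2 = |cutoff n x - cutoff n y|^2 := (sq_abs _).symm
      _ ≤ (‖x - y‖ / n)^2 := by
          nlinarith [abs_nonneg (cutoff n x - cutoff n y),
            div_nonneg (norm_nonneg (x-y)) hnpos.le]
      _ = ‖x - y‖^2 / (n:ℝ)^2 := div_pow _ _ _

lemma cutoff_continuous {N : ℕ} (n : ℕ) : Continuous (cutoff (N := N) n) :=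
  continuous_const.min (continuous_const.max (continuous_const.sub (continuous_norm.div_const _)))

lemma cutoff_measurable {N : ℕ} (n : ℕ) : Measurable (cutoff (N := N) n) :=
  (cutoff_continuous n).measurable

/-- Tonelli + translation invariance. -/
theorem tonelli_trans {N : ℕ} (h g : Euc N → ℝ≥0∞) (hh : Measurable h) (hg : Measurable g) :
    ∫⁻ p : Euc N × Euc N, h p.2 * g (p.1 - p.2) ∂((volume).prod volume)
      = (∫⁻ y, h y) * ∫⁻ z, g z := by
  have hm : AEMeasurable (fun p : Euc N × Euc N => h p.2 * g (p.1 - p.2)) (volume.prod volume) :=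
    ((hh.comp measurable_snd).mul (hg.comp (measurable_fst.sub measurable_snd))).aemeasurable
  rw [MeasureTheory.lintegral_prod_symm _ hm]
  have key : ∀ y : Euc N, ∫⁻ x, h y * g (x - y) = h y * ∫⁻ z, g z := by
    intro y
    rw [lintegral_const_mul (h y) (f := fun x : Euc N => g (x - y))
      (hg.comp (measurable_id.sub measurable_const))]
    congr 1
    have := lintegral_add_right_eq_self g (-y) (μ := (volume : Measure (Euc N)))
    simpa [sub_eq_add_neg] using this
  simp_rw [key]
  rw [lintegral_mul_const _ hh]

lemma ae_prod_fst {α : Type*} [MeasurableSpace α] {μ : Measure α} [SFinite μ] {p : α → Prop}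
    (h : ∀ᵐ x ∂μ, p x) : ∀ᵐ q : α × α ∂(μ.prod μ), p q.1 := by
  rw [ae_iff] at h ⊢
  have hz : (μ.prod μ) ({x | ¬ p x} ×ˢ (Set.univ : Set α)) = 0 := by
    rw [Measure.prod_prod, h, zero_mul]
  exact measure_mono_null
    (fun q (hq : ¬ p q.1) => (⟨hq, Set.mem_univ _⟩ : q ∈ {x | ¬ p x} ×ˢ Set.univ)) hz

lemma ae_prod_snd {α : Type*} [MeasurableSpace α] {μ : Measure α} [SFinite μ] {p : α → Prop}
    (h : ∀ᵐ x ∂μ, p x) : ∀ᵐ q : α × α ∂(μ.prod μ), p q.2 := by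
  rw [ae_iff] at h ⊢
  have hz : (μ.prod μ) ((Set.univ : Set α) ×ˢ {x | ¬ p x}) = 0 := by
    rw [Measure.prod_prod, h, mul_zero]
  exact measure_mono_null
    (fun q (hq : ¬ p q.2) => (⟨Set.mem_univ _, hq⟩ : q ∈ Set.univ ×ˢ {x | ¬ p x})) hz

lemma half_two_mul (x : ℝ≥0∞) : (1/2 : ℝ≥0∞) * (2 * x) = x := by
  rw [← mul_assoc, one_div, ENNReal.inv_mul_cancel two_ne_zero ENNReal.ofNat_ne_top, one_mul]

/-- The main estimate: Ej of a product with a cutoff-like function. -/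
lemma Ej_mul_le {N : ℕ} (j : Euc N → ℝ≥0∞) (hj : Measurable j) (u w B : Euc N → ℝ)
    (hu : Measurable u) (hw : Measurable w) (hB : Measurable B)
    (hBsq : ∀ x y : Euc N, (w x - w y)^2 ≤ B (x - y)) :
    Ej j (fun x => u x * w x) ≤
      (∫⁻ p : Euc N × Euc N, ENNReal.ofReal ((u p.1 - u p.2)^2 * (w p.1)^2) * j (p.1 - p.2)
        ∂(volume.prod volume))
      + l2sq u * ∫⁻ z, ENNReal.ofReal (B z) * j z := by
  set a : Euc N × Euc N → ℝ≥0∞ := fun p =>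
    ENNReal.ofReal ((u p.1 - u p.2)^2 * (w p.1)^2) * j (p.1 - p.2) with ha
  set b : Euc N × Euc N → ℝ≥0∞ := fun p =>
    ENNReal.ofReal ((u p.2)^2) * (ENNReal.ofReal (B (p.1 - p.2)) * j (p.1 - p.2)) with hb
  have ha_meas : Measurable a := by
    apply Measurable.mul ?_ (hj.comp (measurable_fst.sub measurable_snd))
    exact ((((hu.comp measurable_fst).sub (hu.comp measurable_snd)).pow measurable_const).mul
      ((hw.comp measurable_fst).pow measurable_const)).ennreal_ofReal
  have hpt : ∀ p : Euc N × Euc N,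
      ENNReal.ofReal ((u p.1 * w p.1 - u p.2 * w p.2)^2) * j (p.1 - p.2)
        ≤ 2 * a p + 2 * b p := by
    intro p
    obtain ⟨x, y⟩ := p
    simp only [ha, hb]
    have hBnn : (0:ℝ) ≤ B (x - y) := le_trans (sq_nonneg (w x - w y)) (hBsq x y)
    have key : (u x * w x - u y * w y)^2
        ≤ 2*((u x - u y)^2*(w x)^2) + 2*((u y)^2 * B (x - y)) := by
      have h1 : (u y)^2 * (w x - w y)^2 ≤ (u y)^2 * B (x - y) :=
        mul_le_mul_of_nonneg_left (hBsq x y) (sq_nonneg _)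
      nlinarith [sq_nonneg ((u x - u y)*w x - u y*(w x - w y))]
    have expand : ENNReal.ofReal (2*((u x - u y)^2*(w x)^2) + 2*((u y)^2 * B (x - y)))
        = 2 * ENNReal.ofReal ((u x - u y)^2*(w x)^2)
          + 2 * (ENNReal.ofReal ((u y)^2) * ENNReal.ofReal (B (x - y))) := by
      rw [ENNReal.ofReal_add (by positivity) (by positivity),
        ENNReal.ofReal_mul (by norm_num : (0:ℝ) ≤ 2),
        ENNReal.ofReal_mul (by norm_num : (0:ℝ) ≤ 2),
        ENNReal.ofReal_mul (sq_nonneg (u y)), ENNReal.ofReal_ofNat]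
    calc ENNReal.ofReal ((u x * w x - u y * w y)^2) * j (x - y)
        ≤ ENNReal.ofReal (2*((u x - u y)^2*(w x)^2) + 2*((u y)^2 * B (x - y))) * j (x - y) :=
          mul_le_mul_left (ENNReal.ofReal_le_ofReal key) _
      _ = 2 * (ENNReal.ofReal ((u x - u y)^2*(w x)^2) * j (x - y))
          + 2 * (ENNReal.ofReal ((u y)^2) * (ENNReal.ofReal (B (x - y)) * j (x - y))) := by
          rw [expand]; ring
      _ ≤ _ := le_refl _
  have step : Ej j (fun x => u x * w x)
      ≤ (∫⁻ p, a p ∂(volume.prod volume)) + ∫⁻ p, b p ∂(volume.prod volume) := by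
    calc Ej j (fun x => u x * w x)
        ≤ (1/2 : ℝ≥0∞) * ∫⁻ p : Euc N × Euc N, (2 * a p + 2 * b p) ∂(volume.prod volume) := by
          unfold Ej
          exact mul_le_mul_right (lintegral_mono hpt) _
      _ = (1/2 : ℝ≥0∞) * (2 * (∫⁻ p, a p ∂(volume.prod volume))
            + 2 * ∫⁻ p, b p ∂(volume.prod volume)) := by
          rw [lintegral_add_left (ha_meas.const_mul 2),
            lintegral_const_mul 2 ha_meas, lintegral_const_mul' 2 b ENNReal.ofNat_ne_top]
      _ = _ := by rw [mul_add, half_two_mul, half_two_mul]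
  refine step.trans ?_
  gcongr
  rw [hb]
  rw [tonelli_trans (fun y => ENNReal.ofReal ((u y)^2)) (fun z => ENNReal.ofReal (B z) * j z)
    ((hu.pow measurable_const).ennreal_ofReal) (hB.ennreal_ofReal.mul hj)]
  rfl

lemma memL2_lintegral_sq_lt_top {N : ℕ} {f : Euc N → ℝ} (h : MemLp f 2 (volume : Measure (Euc N))) :
    l2sq f < ⊤ := by
  have h1 : Integrable (fun x => ‖f x‖ ^ (2:ℝ)) (volume : Measure (Euc N)) := by
    simpa using h.integrable_norm_rpow two_ne_zero ENNReal.ofNat_ne_top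
  have h2 := h1.lintegral_lt_top
  refine lt_of_eq_of_lt ?_ h2
  apply lintegral_congr; intro x
  rw [Real.rpow_two, Real.norm_eq_abs, sq_abs]

/-- Functions with bounded support are dense in 𝒟ʲ(ℝᴺ). -/
theorem bounded_support_dense {N : ℕ} (j : Euc N → ℝ≥0∞) (hj : Measurable j)
    (heven : ∀ z, j (-z) = j z) (hA1 : CondA1 j)
    (u : Euc N → ℝ) (hu : MemDj j u) (ε : ℝ) (hε : 0 < ε) :
    ∃ v : Euc N → ℝ, MemDj j v ∧ Bornology.IsBounded (Function.support v) ∧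
      DnormSq j (fun x => u x - v x) < ENNReal.ofReal (ε^2) := by
  obtain ⟨huL2, huE⟩ := hu
  set u₀ : Euc N → ℝ := huL2.1.mk u with hu₀def
  have hu₀m : Measurable u₀ := huL2.1.stronglyMeasurable_mk.measurable
  have hae : u =ᵐ[volume] u₀ := huL2.1.ae_eq_mk
  -- transfer of Ej and l2sq along a.e. equality
  have hprod : ∀ᵐ p : Euc N × Euc N ∂(volume.prod volume), u p.1 = u₀ p.1 ∧ u p.2 = u₀ p.2 :=
    (ae_prod_fst hae).and (ae_prod_snd hae)
  have hEj_congr : ∀ v : Euc N → ℝ,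
      Ej j (fun x => u x - v x) = Ej j (fun x => u₀ x - v x) := by
    intro v
    unfold Ej
    congr 1
    apply lintegral_congr_ae
    filter_upwards [hprod] with p hp
    rw [hp.1, hp.2]
  have hl2_congr : ∀ v : Euc N → ℝ,
      l2sq (fun x => u x - v x) = l2sq (fun x => u₀ x - v x) := by
    intro v
    unfold l2sq
    apply lintegral_congr_ae
    filter_upwards [hae] with x hx
    rw [hx]
  have huE₀ : Ej j u₀ < ⊤ := by
    refine lt_of_eq_of_lt ?_ huE
    unfold Ej
    congr 1
    apply lintegral_congr_ae
    filter_upwards [hprod] with p hp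
    rw [hp.1, hp.2]
  have hL2fin : l2sq u₀ < ⊤ := by
    refine lt_of_eq_of_lt ?_ (memL2_lintegral_sq_lt_top huL2)
    unfold l2sq
    apply lintegral_congr_ae
    filter_upwards [hae] with x hx
    rw [hx]
  -- the three quantities that tend to zero
  set Ψ : ℕ → Euc N → ℝ := fun n x => 1 - cutoff n x with hΨ
  have hΨm : ∀ n, Measurable (Ψ n) := fun n => measurable_const.sub (cutoff_measurable n)
  have hΨ01 : ∀ n x, 0 ≤ Ψ n x ∧ Ψ n x ≤ 1 := by
    intro n x
    constructor <;> simp only [hΨ] <;>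
      [linarith [cutoff_le_one n x]; linarith [cutoff_nonneg n x]]
  have hΨ0 : ∀ (n : ℕ) (x : Euc N), ‖x‖ ≤ n → Ψ n x = 0 := by
    intro n x hx; simp [hΨ, cutoff_eq_one hx]
  set T : ℕ → ℝ≥0∞ := fun n => ∫⁻ p : Euc N × Euc N,
    ENNReal.ofReal ((u₀ p.1 - u₀ p.2)^2 * (Ψ n p.1)^2) * j (p.1 - p.2) ∂(volume.prod volume)
    with hT
  set A : ℕ → ℝ≥0∞ := fun n => ∫⁻ z, ENNReal.ofReal (min 1 (‖z‖^2 / (n:ℝ)^2)) * j z with hA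
  set L : ℕ → ℝ≥0∞ := fun n => ∫⁻ x, ENNReal.ofReal ((u₀ x * Ψ n x)^2) with hL
  -- dominating functions
  have hIfin : (∫⁻ p : Euc N × Euc N,
      ENNReal.ofReal ((u₀ p.1 - u₀ p.2)^2) * j (p.1 - p.2) ∂(volume.prod volume)) < ⊤ := by
    have h2 : (2:ℝ≥0∞) * Ej j u₀ < ⊤ := ENNReal.mul_lt_top (by norm_num) huE₀
    refine lt_of_eq_of_lt ?_ h2
    unfold Ej
    rw [← mul_assoc, ENNReal.mul_div_cancel two_ne_zero ENNReal.ofNat_ne_top, one_mul]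
  -- Tendsto T
  have hTmeas : ∀ n, Measurable (fun p : Euc N × Euc N =>
      ENNReal.ofReal ((u₀ p.1 - u₀ p.2)^2 * (Ψ n p.1)^2) * j (p.1 - p.2)) := by
    intro n
    apply Measurable.mul ?_ (hj.comp (measurable_fst.sub measurable_snd))
    exact ((((hu₀m.comp measurable_fst).sub (hu₀m.comp measurable_snd)).pow
      measurable_const).mul (((hΨm n).comp measurable_fst).pow measurable_const)).ennreal_ofReal
  have hTbound : ∀ n, (fun p : Euc N × Euc N =>
      ENNReal.ofReal ((u₀ p.1 - u₀ p.2)^2 * (Ψ n p.1)^2) * j (p.1 - p.2))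
      ≤ᵐ[volume.prod volume]
      (fun p : Euc N × Euc N => ENNReal.ofReal ((u₀ p.1 - u₀ p.2)^2) * j (p.1 - p.2)) := by
    intro n
    apply Filter.Eventually.of_forall
    intro p
    apply mul_le_mul_left
    apply ENNReal.ofReal_le_ofReal
    have h01 := hΨ01 n p.1
    have hsq : (Ψ n p.1)^2 ≤ 1 := by nlinarith [h01.1, h01.2]
    exact mul_le_of_le_one_right (sq_nonneg _) hsq
  have hTtend : Tendsto T atTop (𝓝 0) := by
    have := tendsto_lintegral_of_dominated_convergence (μ := volume.prod volume)
      (F := fun n (p : Euc N × Euc N) =>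
        ENNReal.ofReal ((u₀ p.1 - u₀ p.2)^2 * (Ψ n p.1)^2) * j (p.1 - p.2))
      (f := fun _ => 0)
      (fun p : Euc N × Euc N => ENNReal.ofReal ((u₀ p.1 - u₀ p.2)^2) * j (p.1 - p.2))
      hTmeas hTbound hIfin.ne ?_
    · simpa using this
    · apply Filter.Eventually.of_forall
      intro p
      have hev : ∀ᶠ n in atTop, ENNReal.ofReal ((u₀ p.1 - u₀ p.2)^2 * (Ψ n p.1)^2)
          * j (p.1 - p.2) = 0 := by
        filter_upwards [eventually_ge_atTop ⌈‖p.1‖⌉₊] with n hn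
        have : ‖p.1‖ ≤ (n:ℝ) := (Nat.le_ceil _).trans (by exact_mod_cast hn)
        rw [hΨ0 n p.1 this]
        norm_num
      exact Tendsto.congr' (hev.mono fun n h => h.symm) tendsto_const_nhds
  -- Tendsto A
  have hminle : ∀ (n : ℕ) (z : Euc N), 1 ≤ n → min 1 (‖z‖^2 / (n:ℝ)^2) ≤ min 1 (‖z‖^2) := by
    intro n z hn
    have hn1 : (1:ℝ) ≤ (n:ℝ)^2 := by
      have : (1:ℝ) ≤ (n:ℝ) := by exact_mod_cast hn
      nlinarith
    exact min_le_min (le_refl _) (div_le_self (sq_nonneg _) hn1)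
  have hAbound : ∀ n : ℕ, (fun z => ENNReal.ofReal (min 1 (‖z‖^2 / (n:ℝ)^2)) * j z)
      ≤ᵐ[volume] (fun z => ENNReal.ofReal (min 1 (‖z‖^2)) * j z) := by
    intro n
    apply Filter.Eventually.of_forall
    intro z
    apply mul_le_mul_left
    apply ENNReal.ofReal_le_ofReal
    rcases Nat.eq_zero_or_pos n with h0 | h1
    · subst h0
      simp only [Nat.cast_zero]
      rw [show ((0:ℝ)^2 : ℝ) = 0 by norm_num, _root_.div_zero,
        min_eq_right (zero_le_one (α := ℝ))]
      positivity
    · exact hminle n z h1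
  have hAmeas : ∀ n : ℕ, Measurable (fun z : Euc N =>
      ENNReal.ofReal (min 1 (‖z‖^2 / (n:ℝ)^2)) * j z) := by
    intro n
    exact ((measurable_const.min ((measurable_norm.pow measurable_const).div
      measurable_const)).ennreal_ofReal).mul hj
  have hjae : ∀ᵐ z : Euc N ∂volume, ENNReal.ofReal (min 1 (‖z‖^2)) * j z < ⊤ :=
    ae_lt_top (((measurable_const.min (measurable_norm.pow
      measurable_const)).ennreal_ofReal).mul hj) hA1.2.ne
  have hAtend : Tendsto A atTop (𝓝 0) := by
    have := tendsto_lintegral_of_dominated_convergence (μ := (volume : Measure (Euc N)))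
      (F := fun n z => ENNReal.ofReal (min 1 (‖z‖^2 / (n:ℝ)^2)) * j z)
      (f := fun _ => 0)
      (fun z => ENNReal.ofReal (min 1 (‖z‖^2)) * j z)
      hAmeas hAbound hA1.2.ne ?_
    · simpa [hA] using this
    · filter_upwards [hjae] with z hz
      by_cases hz0 : z = 0
      · subst hz0
        have : ∀ n : ℕ, ENNReal.ofReal (min 1 (‖(0 : Euc N)‖^2 / (n:ℝ)^2)) * j 0 = 0 := by
          intro n; simp
        simpa [this] using tendsto_const_nhds (x := (0:ℝ≥0∞)) (f := atTop (α := ℕ))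
      · have hjlt : j z ≠ ⊤ := by
          intro hcon
          rw [hcon] at hz
          have hpos : 0 < min 1 (‖z‖^2) := by
            have : 0 < ‖z‖ := norm_pos_iff.mpr hz0
            positivity
          rw [ENNReal.mul_top (ENNReal.ofReal_pos.2 hpos).ne'] at hz
          exact (lt_irrefl _ hz).elim
        have h1 : Tendsto (fun n : ℕ => ‖z‖^2 / (n:ℝ)^2) atTop (𝓝 0) := by
          apply Tendsto.div_atTop tendsto_const_nhds
          exact (tendsto_pow_atTop two_ne_zero).comp tendsto_natCast_atTop_atTop
        have h2 : Tendsto (fun n : ℕ => min 1 (‖z‖^2 / (n:ℝ)^2)) atTop (𝓝 0) := by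
          have hc : Continuous (fun t : ℝ => min 1 t) := continuous_const.min continuous_id
          have := (hc.tendsto 0).comp h1
          simpa [Function.comp_def] using this
        have h3 : Tendsto (fun n : ℕ => ENNReal.ofReal (min 1 (‖z‖^2 / (n:ℝ)^2))) atTop (𝓝 0) := by
          have := (ENNReal.continuous_ofReal.tendsto 0).comp h2
          simpa [Function.comp_def] using this
        have := ENNReal.Tendsto.mul_const h3 (Or.inr hjlt)
        simpa using this
  -- Tendsto L
  have hLmeas : ∀ n : ℕ, Measurable (fun x : Euc N => ENNReal.ofReal ((u₀ x * Ψ n x)^2)) :=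
    fun n => ((hu₀m.mul (hΨm n)).pow measurable_const).ennreal_ofReal
  have hLbound : ∀ n : ℕ, (fun x : Euc N => ENNReal.ofReal ((u₀ x * Ψ n x)^2))
      ≤ᵐ[volume] fun x => ENNReal.ofReal ((u₀ x)^2) := by
    intro n
    apply Filter.Eventually.of_forall
    intro x
    apply ENNReal.ofReal_le_ofReal
    have h01 := hΨ01 n x
    have hsq : (Ψ n x)^2 ≤ 1 := by nlinarith [h01.1, h01.2]
    rw [mul_pow]
    exact mul_le_of_le_one_right (sq_nonneg _) hsq
  have hLtend : Tendsto L atTop (𝓝 0) := by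
    have := tendsto_lintegral_of_dominated_convergence (μ := (volume : Measure (Euc N)))
      (F := fun n x => ENNReal.ofReal ((u₀ x * Ψ n x)^2))
      (f := fun _ => 0)
      (fun x => ENNReal.ofReal ((u₀ x)^2))
      hLmeas hLbound hL2fin.ne ?_
    · simpa using this
    · apply Filter.Eventually.of_forall
      intro x
      have hev : ∀ᶠ n in atTop, ENNReal.ofReal ((u₀ x * Ψ n x)^2) = 0 := by
        filter_upwards [eventually_ge_atTop ⌈‖x‖⌉₊] with n hn
        have : ‖x‖ ≤ (n:ℝ) := (Nat.le_ceil _).trans (by exact_mod_cast hn)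
        rw [hΨ0 n x this]
        norm_num
      exact Tendsto.congr' (hev.mono fun n h => h.symm) tendsto_const_nhds
  -- combine
  have hsum : Tendsto (fun n => T n + l2sq u₀ * A n + L n) atTop (𝓝 0) := by
    have h1 : Tendsto (fun n => l2sq u₀ * A n) atTop (𝓝 0) := by
      have := ENNReal.Tendsto.const_mul hAtend (Or.inr hL2fin.ne)
      simpa using this
    have := (hTtend.add h1).add hLtend
    simpa using this
  have hεpos : (0:ℝ≥0∞) < ENNReal.ofReal (ε^2) := by
    rw [ENNReal.ofReal_pos]; positivity
  obtain ⟨n, hn_lt, hn1⟩ :=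
    ((hsum.eventually (eventually_lt_nhds hεpos)).and (eventually_ge_atTop 1)).exists
  -- the candidate
  refine ⟨fun x => u₀ x * cutoff n x, ⟨?_, ?_⟩, ?_, ?_⟩
  · -- Memℒp
    refine MemLp.of_le huL2 ((hu₀m.mul (cutoff_measurable n)).aestronglyMeasurable) ?_
    filter_upwards [hae] with x hx
    rw [hx, Real.norm_eq_abs, Real.norm_eq_abs, abs_mul]
    calc |u₀ x| * |cutoff n x| ≤ |u₀ x| * 1 := by
          apply mul_le_mul_of_nonneg_left _ (abs_nonneg _)
          rw [abs_le]
          exact ⟨by linarith [cutoff_nonneg n x], cutoff_le_one n x⟩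
      _ = |u₀ x| := mul_one _
  · -- Ej finite
    have hest := Ej_mul_le j hj u₀ (cutoff n) (fun z => min 1 (‖z‖^2 / (n:ℝ)^2))
      hu₀m (cutoff_measurable n)
      (measurable_const.min ((measurable_norm.pow measurable_const).div measurable_const))
      (fun x y => cutoff_sq_diff hn1 x y)
    refine lt_of_le_of_lt hest ?_
    apply ENNReal.add_lt_top.2
    constructor
    · refine lt_of_le_of_lt (lintegral_mono fun p => ?_) hIfin
      apply mul_le_mul_left
      apply ENNReal.ofReal_le_ofReal
      have h1 : (cutoff n p.1)^2 ≤ 1 := by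
        nlinarith [cutoff_nonneg n p.1, cutoff_le_one n p.1]
      exact mul_le_of_le_one_right (sq_nonneg _) h1
    · exact ENNReal.mul_lt_top hL2fin (lt_of_le_of_lt (lintegral_mono_ae (hAbound n)) hA1.2)
  · -- bounded support
    apply Bornology.IsBounded.subset (Metric.isBounded_closedBall (x := (0 : Euc N))
      (r := 2 * n))
    intro x hx
    rw [Function.mem_support] at hx
    rw [Metric.mem_closedBall, dist_zero_right]
    by_contra hcon
    push_neg at hcon
    rw [cutoff_eq_zero hn1 hcon.le, mul_zero] at hx
    exact hx rfl
  · -- the norm estimate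
    have heq : (fun x => u x - u₀ x * cutoff n x) =ᵐ[volume] (fun x => u₀ x * Ψ n x) := by
      filter_upwards [hae] with x hx
      rw [hx, hΨ]; ring
    have hD : DnormSq j (fun x => u x - u₀ x * cutoff n x)
        = Ej j (fun x => u₀ x * Ψ n x) + l2sq (fun x => u₀ x * Ψ n x) := by
      unfold DnormSq
      congr 1
      · rw [hEj_congr (fun x => u₀ x * cutoff n x)]
        unfold Ej
        congr 1
        apply lintegral_congr fun p => ?_
        congr 3
        simp only [hΨ]; ring
      · rw [hl2_congr (fun x => u₀ x * cutoff n x)]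
        unfold l2sq
        apply lintegral_congr fun x => ?_
        congr 2
        simp only [hΨ]; ring
    rw [hD]
    have hsqΨ : ∀ x y : Euc N, (Ψ n x - Ψ n y)^2 ≤ min 1 (‖x - y‖^2 / (n:ℝ)^2) := by
      intro x y
      have : (Ψ n x - Ψ n y)^2 = (cutoff n x - cutoff n y)^2 := by
        simp only [hΨ]; ring
      rw [this]
      exact cutoff_sq_diff hn1 x y
    have hest := Ej_mul_le j hj u₀ (Ψ n) (fun z => min 1 (‖z‖^2 / (n:ℝ)^2))
      hu₀m (hΨm n)
      (measurable_const.min ((measurable_norm.pow measurable_const).div measurable_const))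
      hsqΨ
    calc Ej j (fun x => u₀ x * Ψ n x) + l2sq (fun x => u₀ x * Ψ n x)
        ≤ (T n + l2sq u₀ * A n) + L n := add_le_add hest (le_refl _)
      _ < ENNReal.ofReal (ε^2) := hn_lt
end
end

section
/- Let q ∈ L¹(ℝᴺ) be a nonnegative even function. Then for all measurable functions u : ℝᴺ → ℝ, ℰ_{q*q}(u,u) ≤ 4‖q‖_{L¹(ℝᴺ)} ℰ_q(u,u), where q*q is the convolution of q with itself. -/
open MeasureTheory ENNReal Filter Topology

noncomputable section

/-- ℰ_k for a real-valued nonnegative kernel k. -/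
def EjR {N : ℕ} (k : Euc N → ℝ) (u : Euc N → ℝ) : ℝ≥0∞ :=
  (1/2 : ℝ≥0∞) * ∫⁻ p : Euc N × Euc N,
    ENNReal.ofReal ((u p.1 - u p.2)^2 * k (p.1 - p.2)) ∂(volume.prod volume)

/-! Let `k` be a measurable version of `ofReal ∘ q`. Then `ofReal ((q ∗ q)(x - y))` is bounded by
`∫ k(x - z) k(z - y) dz`, and splitting `(u x - u y)² ≤ 2 (u x - u z)² + 2 (u z - u y)²` inside the
resulting triple integral leaves, in each half, one factor of `k` depending on a variable that
occurs nowhere else. Integrating it out by translation invariance produces the factor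
`∫ k = ‖q‖₁`, so each half contributes `2 ‖q‖₁ ℰ_q(u,u)`. -/

theorem lintegral_lintegral_mul_eq_of_lintegral_eq {α β : Type*} [MeasurableSpace α]
    [MeasurableSpace β] {μ : Measure α} {ν : Measure β} {H : α → ℝ≥0∞} (hH : Measurable H)
    {K : α → β → ℝ≥0∞} (hK : ∀ a, Measurable (K a)) {C : ℝ≥0∞}
    (hC : ∀ a, ∫⁻ b, K a b ∂ν = C) :
    ∫⁻ a, ∫⁻ b, H a * K a b ∂ν ∂μ = C * ∫⁻ a, H a ∂μ := by
  simp_rw [lintegral_const_mul _ (hK _), hC]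
  rw [lintegral_mul_const _ hH, mul_comm]

section KernelEnergy

variable {G : Type*} [AddCommGroup G] [MeasurableSpace G] [MeasurableAdd₂ G] [MeasurableNeg G]
  {μ : Measure G}

theorem lconvolution_sub_eq [μ.IsAddLeftInvariant] [μ.IsNegInvariant] (k : G → ℝ≥0∞) (x y : G) :
    (k ⋆ₗ[μ] k) (x - y) = ∫⁻ z, k (x - z) * k (z - y) ∂μ := by
  rw [lconvolution_def, ← lintegral_sub_left_eq_self _ x]
  refine lintegral_congr fun z => ?_
  rw [show -(x - z) + (x - y) = z - y by abel]

variable [SFinite μ] {F : G × G → ℝ≥0∞} {k : G → ℝ≥0∞}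

theorem lintegral_prod_lintegral_mul_left [μ.IsAddLeftInvariant] [μ.IsNegInvariant]
    (hF : Measurable F) (hk : Measurable k) :
    ∫⁻ p, ∫⁻ z, F (p.1, z) * k (p.1 - z) * k (z - p.2) ∂μ ∂μ.prod μ =
      (∫⁻ z, k z ∂μ) * ∫⁻ p, F p * k (p.1 - p.2) ∂μ.prod μ := by
  rw [lintegral_prod _ (by fun_prop), lintegral_prod _ (by fun_prop),
    ← lintegral_const_mul (f := fun x => ∫⁻ y, F (x, y) * k (x - y) ∂μ) _ (by fun_prop)]
  refine lintegral_congr fun x => ?_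
  rw [lintegral_lintegral_swap (by fun_prop)]
  refine lintegral_lintegral_mul_eq_of_lintegral_eq (H := fun z => F (x, z) * k (x - z)) ?_
    (fun _ => ?_) fun z => lintegral_sub_left_eq_self (μ := μ) k z
  all_goals fun_prop

theorem lintegral_prod_lintegral_mul_right [μ.IsAddRightInvariant]
    (hF : Measurable F) (hk : Measurable k) :
    ∫⁻ p, ∫⁻ z, F (z, p.2) * k (z - p.2) * k (p.1 - z) ∂μ ∂μ.prod μ =
      (∫⁻ z, k z ∂μ) * ∫⁻ p, F p * k (p.1 - p.2) ∂μ.prod μ := by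
  rw [lintegral_prod_symm _ (by fun_prop), lintegral_prod_symm _ (by fun_prop),
    ← lintegral_const_mul (f := fun y => ∫⁻ x, F (x, y) * k (x - y) ∂μ) _ (by fun_prop)]
  refine lintegral_congr fun y => ?_
  rw [lintegral_lintegral_swap (by fun_prop)]
  refine lintegral_lintegral_mul_eq_of_lintegral_eq (H := fun z => F (z, y) * k (z - y)) ?_
    (fun _ => ?_) fun z => lintegral_sub_right_eq_self (μ := μ) k z
  all_goals fun_prop

theorem lintegral_prod_mul_lconvolution_le [μ.IsAddLeftInvariant] [μ.IsNegInvariant] {c : ℝ≥0∞}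
    (hF : Measurable F) (hF_le : ∀ x y z, F (x, y) ≤ c * (F (x, z) + F (z, y)))
    (hk : Measurable k) :
    ∫⁻ p, F p * (k ⋆ₗ[μ] k) (p.1 - p.2) ∂μ.prod μ ≤
      2 * c * (∫⁻ z, k z ∂μ) * ∫⁻ p, F p * k (p.1 - p.2) ∂μ.prod μ := by
  calc ∫⁻ p, F p * (k ⋆ₗ[μ] k) (p.1 - p.2) ∂μ.prod μ
      = ∫⁻ p, ∫⁻ z, F p * (k (p.1 - z) * k (z - p.2)) ∂μ ∂μ.prod μ := by
        refine lintegral_congr fun p => ?_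
        rw [lconvolution_sub_eq, lintegral_const_mul _ (by fun_prop)]
    _ ≤ ∫⁻ p, (c * ∫⁻ z, F (p.1, z) * k (p.1 - z) * k (z - p.2) ∂μ +
          c * ∫⁻ z, F (z, p.2) * k (z - p.2) * k (p.1 - z) ∂μ) ∂μ.prod μ := by
        gcongr with p
        rw [← lintegral_const_mul _ (by fun_prop), ← lintegral_const_mul _ (by fun_prop),
          ← lintegral_add_left (by fun_prop)]
        gcongr with z
        calc F p * (k (p.1 - z) * k (z - p.2))
            ≤ c * (F (p.1, z) + F (z, p.2)) * (k (p.1 - z) * k (z - p.2)) := by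
              gcongr; exact hF_le p.1 p.2 z
          _ = _ := by ring
    _ = 2 * c * (∫⁻ z, k z ∂μ) * ∫⁻ p, F p * k (p.1 - p.2) ∂μ.prod μ := by
        rw [lintegral_add_left (by fun_prop), lintegral_const_mul _ (by fun_prop),
          lintegral_const_mul _ (by fun_prop), lintegral_prod_lintegral_mul_left hF hk,
          lintegral_prod_lintegral_mul_right hF hk]
        ring

end KernelEnergy

theorem ofReal_sq_sub_le_two_mul (a b c : ℝ) :
    ENNReal.ofReal ((a - b) ^ 2) ≤
      2 * (ENNReal.ofReal ((a - c) ^ 2) + ENNReal.ofReal ((c - b) ^ 2)) := by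
  rw [← ENNReal.ofReal_add (sq_nonneg _) (sq_nonneg _), ← ENNReal.ofReal_ofNat 2,
    ← ENNReal.ofReal_mul zero_le_two]
  exact ENNReal.ofReal_le_ofReal (by nlinarith [sq_nonneg (a - 2 * c + b)])

section EuclideanKernel

variable {N : ℕ} {q : Euc N → ℝ} {k K : Euc N → ℝ≥0∞}

theorem EjR_eq_of_ae_eq (u : Euc N → ℝ) (hqk : (fun z => ENNReal.ofReal (q z)) =ᵐ[volume] k) :
    EjR q u = (1/2 : ℝ≥0∞) * ∫⁻ p : Euc N × Euc N,
      ENNReal.ofReal ((u p.1 - u p.2) ^ 2) * k (p.1 - p.2) ∂(volume.prod volume) := by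
  unfold EjR
  congr 1
  refine lintegral_congr_ae ?_
  filter_upwards [(quasiMeasurePreserving_sub (volume : Measure (Euc N)) volume).ae_eq hqk]
    with p hp
  rw [ENNReal.ofReal_mul (sq_nonneg _)]
  exact congrArg _ hp

theorem EjR_le_of_ofReal_le (u : Euc N → ℝ) (hK : ∀ z, ENNReal.ofReal (q z) ≤ K z) :
    EjR q u ≤ (1/2 : ℝ≥0∞) * ∫⁻ p : Euc N × Euc N,
      ENNReal.ofReal ((u p.1 - u p.2) ^ 2) * K (p.1 - p.2) ∂(volume.prod volume) := by
  unfold EjR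
  gcongr with p
  rw [ENNReal.ofReal_mul (sq_nonneg _)]
  gcongr
  exact hK _

theorem ofReal_integral_mul_sub_le_lconvolution (hq0 : ∀ z, 0 ≤ q z)
    (hqk : (fun z => ENNReal.ofReal (q z)) =ᵐ[volume] k) (z : Euc N) :
    ENNReal.ofReal (∫ y, q y * q (z - y)) ≤ (k ⋆ₗ k) z := by
  have hqk_sub : (fun y => ENNReal.ofReal (q (z - y))) =ᵐ[volume] fun y => k (z - y) :=
    (quasiMeasurePreserving_sub_left volume z).ae_eq hqk
  calc ENNReal.ofReal (∫ y, q y * q (z - y))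
      ≤ ‖∫ y, q y * q (z - y)‖ₑ := by
        rw [Real.enorm_eq_ofReal_abs]; exact ENNReal.ofReal_le_ofReal (le_abs_self _)
    _ ≤ ∫⁻ y, ‖q y * q (z - y)‖ₑ := enorm_integral_le_lintegral_enorm _
    _ = (k ⋆ₗ k) z := by
      rw [lconvolution_def]
      refine lintegral_congr_ae ?_
      filter_upwards [hqk, hqk_sub] with y hy hy_sub
      rw [Real.enorm_of_nonneg (mul_nonneg (hq0 _) (hq0 _)), ENNReal.ofReal_mul (hq0 _), hy,
        hy_sub, neg_add_eq_sub]

end EuclideanKernel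

theorem Ej_convolution_bound_general {N : ℕ} (q : Euc N → ℝ)
    (hq : Integrable q (volume : Measure (Euc N)))
    (hq0 : ∀ z, 0 ≤ q z)
    (u : Euc N → ℝ) (hu : Measurable u) :
    EjR (fun z => ∫ y, q y * q (z - y)) u ≤ ENNReal.ofReal (4 * ∫ z, q z) * EjR q u := by
  obtain ⟨k, hk, hqk⟩ : AEMeasurable (fun z => ENNReal.ofReal (q z)) :=
    hq.aemeasurable.ennreal_ofReal
  have hmass : ENNReal.ofReal (4 * ∫ z, q z) = 4 * ∫⁻ z, k z := by
    rw [ENNReal.ofReal_mul zero_le_four, ENNReal.ofReal_ofNat,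
      ofReal_integral_eq_lintegral_ofReal hq (ae_of_all _ hq0), lintegral_congr_ae hqk]
  rw [EjR_eq_of_ae_eq u hqk, hmass]
  calc EjR (fun z => ∫ y, q y * q (z - y)) u
      ≤ (1/2 : ℝ≥0∞) * ∫⁻ p : Euc N × Euc N,
          ENNReal.ofReal ((u p.1 - u p.2) ^ 2) * (k ⋆ₗ k) (p.1 - p.2) ∂(volume.prod volume) :=
        EjR_le_of_ofReal_le u (ofReal_integral_mul_sub_le_lconvolution hq0 hqk)
    _ ≤ (1/2 : ℝ≥0∞) * (2 * 2 * (∫⁻ z, k z) * ∫⁻ p : Euc N × Euc N,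
          ENNReal.ofReal ((u p.1 - u p.2) ^ 2) * k (p.1 - p.2) ∂(volume.prod volume)) := by
        gcongr
        exact lintegral_prod_mul_lconvolution_le (by fun_prop)
          (fun x y z => ofReal_sq_sub_le_two_mul (u x) (u y) (u z)) hk
    _ = _ := by ring

/-- For a nonnegative even q ∈ L¹, ℰ_{q∗q}(u,u) ≤ 4‖q‖_{L¹} ℰ_q(u,u). -/
theorem Ej_convolution_bound {N : ℕ} (q : Euc N → ℝ)
    (hq : Integrable q (volume : Measure (Euc N)))
    (hq0 : ∀ z, 0 ≤ q z) (heven : ∀ z, q (-z) = q z)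
    (u : Euc N → ℝ) (hu : Measurable u) :
    EjR (fun z => ∫ y, q y * q (z - y)) u ≤ ENNReal.ofReal (4 * ∫ z, q z) * EjR q u :=
  Ej_convolution_bound_general q hq hq0 u hu
end
end

section
/- Let j : ℝᴺ → [0,∞] be measurable, even, with 0 < ∫ min{1,|z|²} j(z) dz < ∞. For every a > 0 there exists a constant C_a > 0 such that for any open Ω ⊂ (−a,a) × ℝ^{N−1} and any u ∈ 𝒟ʲ(Ω), ℰ_j(u,u) ≥ C_a ∫_Ω u²(x) dx (Poincaré inequality on slabs). -/
open MeasureTheory ENNReal Filter Topology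

noncomputable section

/-- The slab (−a,a) × ℝ^{N−1}. -/
def slab {N : ℕ} (hN : 0 < N) (a : ℝ) : Set (Euc N) :=
  {x : Euc N | x ⟨0, hN⟩ ∈ Set.Ioo (-a) a}

lemma hmeas {N : ℕ} (u : Euc N → ℝ) (hu : Measurable u) (c d : Euc N) :
    Measurable fun x : Euc N => ENNReal.ofReal ((u (x + c) - u (x + d))^2) :=
  (((hu.comp (measurable_add_const c)).sub (hu.comp (measurable_add_const d))).pow_const 2).ennreal_ofReal

lemma key1 {N : ℕ} (hN : 0 < N) {a δ : ℝ} (ha : 0 < a) {k : ℕ} (hk : 2*a ≤ k*δ)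
    {Ω : Set (Euc N)} (hΩ : Ω ⊆ slab hN a) {u : Euc N → ℝ} (hu : Measurable u)
    (hsupp : ∀ᵐ x : Euc N, x ∉ Ω → u x = 0) {z : Euc N} (hz : δ ≤ |z ⟨0, hN⟩|) :
    l2sq u ≤ (k : ℝ≥0∞)^2 * ∫⁻ x, ENNReal.ofReal ((u x - u (x + z))^2) := by
  set i0 : Fin N := ⟨0, hN⟩
  -- Step A
  have h2 : ∀ᵐ x : Euc N, (x + k • z) ∉ Ω → u (x + k • z) = 0 := by
    have hmp := measurePreserving_add_right (volume : Measure (Euc N)) (k • z)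
    have := hmp.quasiMeasurePreserving.preimage_null (s := {x : Euc N | ¬ (x ∉ Ω → u x = 0)}) hsupp
    exact this
  have hA : ∀ᵐ x : Euc N, (u x)^2 ≤ (u x - u (x + k • z))^2 := by
    filter_upwards [hsupp, h2] with x h1 h2'
    by_cases hx : x ∈ Ω
    · have hout : (x + k • z) ∉ Ω := by
        intro hmem
        have hs := hΩ hmem
        have hs' := hΩ hx
        simp only [slab, Set.mem_setOf_eq, Set.mem_Ioo] at hs hs'
        have hco : (x + k • z) i0 = x i0 + (k:ℝ) * z i0 := by
          simp [PiLp.add_apply, PiLp.smul_apply, nsmul_eq_mul]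
        rw [hco] at hs
        have hkz : 2*a ≤ (k:ℝ) * |z i0| := le_trans hk (by
          have : (0:ℝ) ≤ (k:ℝ) := Nat.cast_nonneg k
          nlinarith [le_abs_self (z i0), abs_nonneg (z i0)])
        have h1' : |x i0| < a := abs_lt.2 ⟨hs'.1, hs'.2⟩
        have h2'' : |x i0 + (k:ℝ) * z i0| < a := abs_lt.2 ⟨hs.1, hs.2⟩
        have h3 : |(k:ℝ) * z i0| = (k:ℝ) * |z i0| := by
          rw [abs_mul, Nat.abs_cast]
        have h4 := abs_sub (x i0 + (k:ℝ)*z i0) (x i0)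
        have h5 : x i0 + (k:ℝ)*z i0 - x i0 = (k:ℝ)*z i0 := by ring
        rw [h5] at h4
        linarith
      rw [h2' hout]
      ring_nf
      exact le_refl _
    · rw [h1 hx]; nlinarith [sq_nonneg (u x - u (x + k • z))]
  have hstepA : l2sq u ≤ ∫⁻ x, ENNReal.ofReal ((u x - u (x + k • z))^2) := by
    refine lintegral_mono_ae ?_
    filter_upwards [hA] with x hx using ENNReal.ofReal_le_ofReal hx
  refine hstepA.trans ?_
  -- Step B: pointwise telescoping
  have htel : ∀ x : Euc N, ENNReal.ofReal ((u x - u (x + k • z))^2) ≤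
      (k : ℝ≥0∞) * ∑ i ∈ Finset.range k, ENNReal.ofReal ((u (x + i • z) - u (x + (i+1) • z))^2) := by
    intro x
    have hsum : u x - u (x + k • z) =
        ∑ i ∈ Finset.range k, (u (x + i • z) - u (x + (i+1) • z)) := by
      have := Finset.sum_range_sub' (fun i => u (x + i • z)) k
      simpa using this.symm
    have hcs : (u x - u (x + k • z))^2 ≤
        (k:ℝ) * ∑ i ∈ Finset.range k, (u (x + i • z) - u (x + (i+1) • z))^2 := by
      rw [hsum]
      have := sq_sum_le_card_mul_sum_sq
        (s := Finset.range k) (f := fun i => u (x + i • z) - u (x + (i+1) • z))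
      simpa using this
    calc ENNReal.ofReal ((u x - u (x + k • z))^2) ≤
        ENNReal.ofReal ((k:ℝ) * ∑ i ∈ Finset.range k, (u (x + i • z) - u (x + (i+1) • z))^2) :=
          ENNReal.ofReal_le_ofReal hcs
      _ = (k : ℝ≥0∞) * ∑ i ∈ Finset.range k, ENNReal.ofReal ((u (x + i • z) - u (x + (i+1) • z))^2) := by
          rw [ENNReal.ofReal_mul (Nat.cast_nonneg k), ENNReal.ofReal_natCast,
            ENNReal.ofReal_sum_of_nonneg (fun i _ => sq_nonneg _)]
  calc ∫⁻ x, ENNReal.ofReal ((u x - u (x + k • z))^2)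
      ≤ ∫⁻ x, (k : ℝ≥0∞) * ∑ i ∈ Finset.range k, ENNReal.ofReal ((u (x + i • z) - u (x + (i+1) • z))^2) :=
        lintegral_mono htel
    _ = (k : ℝ≥0∞) * ∑ i ∈ Finset.range k, ∫⁻ x, ENNReal.ofReal ((u (x + i • z) - u (x + (i+1) • z))^2) := by
        rw [lintegral_const_mul]
        · rw [lintegral_finset_sum]
          intro i _
          exact hmeas u hu (i • z) ((i+1) • z)
        · exact Finset.measurable_sum _ fun i _ => hmeas u hu (i • z) ((i+1) • z)
    _ = (k : ℝ≥0∞) * ∑ i ∈ Finset.range k, ∫⁻ x, ENNReal.ofReal ((u x - u (x + z))^2) := by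
        congr 1
        refine Finset.sum_congr rfl fun i _ => ?_
        have : ∀ x : Euc N, x + (i+1) • z = (x + i • z) + z := by
          intro x; rw [add_assoc, ← succ_nsmul]
        simp_rw [this]
        exact lintegral_add_right_eq_self (fun y => ENNReal.ofReal ((u y - u (y + z))^2)) (i • z)
    _ = (k : ℝ≥0∞)^2 * ∫⁻ x, ENNReal.ofReal ((u x - u (x + z))^2) := by
        rw [Finset.sum_const, Finset.card_range, nsmul_eq_mul, sq, mul_assoc]

lemma Ej_eq {N : ℕ} (j : Euc N → ℝ≥0∞) (hj : Measurable j) (heven : ∀ z, j (-z) = j z)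
    (u : Euc N → ℝ) (hu : Measurable u) :
    Ej j u = (1/2 : ℝ≥0∞) * ∫⁻ z, (∫⁻ x, ENNReal.ofReal ((u x - u (x + z))^2)) * j z := by
  have hF : Measurable (fun p : Euc N × Euc N =>
      ENNReal.ofReal ((u p.1 - u p.2)^2) * j (p.1 - p.2)) :=
    ((((hu.comp measurable_fst).sub (hu.comp measurable_snd)).pow_const 2).ennreal_ofReal).mul
      (hj.comp (measurable_fst.sub measurable_snd))
  have hT : MeasurePreserving (fun q : Euc N × Euc N => (q.1, q.1 + q.2))
      ((volume : Measure (Euc N)).prod volume) (volume.prod volume) :=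
    measurePreserving_prod_add _ _
  have h1 : ∫⁻ p : Euc N × Euc N, ENNReal.ofReal ((u p.1 - u p.2)^2) * j (p.1 - p.2)
        ∂(volume.prod volume)
      = ∫⁻ q : Euc N × Euc N, ENNReal.ofReal ((u q.1 - u (q.1 + q.2))^2) * j q.2
        ∂(volume.prod volume) := by
    rw [← hT.lintegral_comp hF]
    refine lintegral_congr fun q => ?_
    simp only []
    congr 1
    rw [show q.1 - (q.1 + q.2) = -q.2 by abel, heven]
  have hG : Measurable (fun q : Euc N × Euc N =>
      ENNReal.ofReal ((u q.1 - u (q.1 + q.2))^2) * j q.2) :=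
    ((((hu.comp measurable_fst).sub (hu.comp (measurable_fst.add measurable_snd))).pow_const 2).ennreal_ofReal).mul
      (hj.comp measurable_snd)
  rw [Ej, h1, lintegral_prod_symm _ hG.aemeasurable]
  congr 1
  refine lintegral_congr fun z => ?_
  exact lintegral_mul_const (j z) ((((hu.sub (hu.comp (measurable_add_const z)))).pow_const 2).ennreal_ofReal)

lemma find_set {N : ℕ} (hN : 0 < N) (j : Euc N → ℝ≥0∞) (hj : Measurable j)
    (hpos : 0 < ∫⁻ z, ENNReal.ofReal (min 1 (‖z‖^2)) * j z) :
    ∃ S : Set (Euc N), MeasurableSet S ∧ 0 < volume S ∧ volume S < ⊤ ∧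
      ∃ n : ℕ, (∀ z ∈ S, ((n : ℝ≥0∞)+1)⁻¹ ≤ j z ∧ ((n:ℝ)+1)⁻¹ ≤ |z ⟨0, hN⟩|) := by
  set i0 : Fin N := ⟨0, hN⟩
  set f : Euc N → ℝ≥0∞ := fun z => ENNReal.ofReal (min 1 (‖z‖^2)) * j z with hf
  have hfm : Measurable f := by
    apply Measurable.mul _ hj
    exact (measurable_const.min ((measurable_norm).pow_const 2)).ennreal_ofReal
  have hP : volume {z : Euc N | f z ≠ 0} ≠ 0 := by
    intro h0
    have : f =ᵐ[volume] 0 := by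
      rw [Filter.EventuallyEq, ae_iff]
      simpa using h0
    rw [← lintegral_eq_zero_iff hfm] at this
    exact hpos.ne' this
  have hH : volume {z : Euc N | z i0 = 0} = 0 := by
    have : {z : Euc N | z i0 = 0} = (LinearMap.ker (EuclideanSpace.projₗ (𝕜 := ℝ) i0) : Set (Euc N)) := by
      ext x; simp [LinearMap.mem_ker]
    rw [this]
    apply Measure.addHaar_submodule
    intro h
    have h1 : (EuclideanSpace.single i0 (1:ℝ)) ∈ LinearMap.ker (EuclideanSpace.projₗ (𝕜 := ℝ) i0) :=
      h ▸ Submodule.mem_top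
    simp [LinearMap.mem_ker] at h1
  set S : ℕ → Set (Euc N) := fun n =>
    {z : Euc N | ((n : ℝ≥0∞)+1)⁻¹ ≤ j z ∧ ((n:ℝ)+1)⁻¹ ≤ |z i0| ∧ ‖z‖ ≤ (n:ℝ)+1} with hS
  have hSm : ∀ n, MeasurableSet (S n) := by
    intro n
    have heq : S n = j ⁻¹' (Set.Ici (((n : ℝ≥0∞)+1)⁻¹)) ∩
        ((fun z : Euc N => |z i0|) ⁻¹' Set.Ici (((n:ℝ)+1)⁻¹) ∩
          (fun z : Euc N => ‖z‖) ⁻¹' Set.Iic ((n:ℝ)+1)) := rfl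
    rw [heq]
    refine (hj measurableSet_Ici).inter (MeasurableSet.inter ?_ ?_)
    · exact ((EuclideanSpace.proj (𝕜 := ℝ) i0).continuous.abs).measurable measurableSet_Ici
    · exact measurable_norm measurableSet_Iic
  have hcover : {z : Euc N | f z ≠ 0} \ {z : Euc N | z i0 = 0} ⊆ ⋃ n, S n := by
    rintro z ⟨hz1, hz2⟩
    simp only [Set.mem_setOf_eq] at hz1 hz2
    have hjz : j z ≠ 0 := by
      intro h; apply hz1; rw [hf]; simp [h]
    have habs : 0 < |z i0| := abs_pos.2 hz2
    obtain ⟨n1, hn1⟩ := ENNReal.exists_inv_nat_lt hjz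
    obtain ⟨n2, hn2⟩ := exists_nat_one_div_lt habs
    obtain ⟨n3, hn3⟩ := exists_nat_ge ‖z‖
    refine Set.mem_iUnion.2 ⟨max (max n1 n2) n3, ?_, ?_, ?_⟩
    · refine le_trans ?_ hn1.le
      refine ENNReal.inv_le_inv.2 ?_
      have : (n1 : ℝ≥0∞) ≤ (max (max n1 n2) n3 : ℕ) := by
        exact_mod_cast Nat.cast_le.2 (le_max_of_le_left (le_max_left _ _))
      exact le_trans this (le_self_add)
    · have h1 : ((max (max n1 n2) n3 : ℕ) : ℝ) + 1 ≥ (n2 : ℝ) + 1 := by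
        have : (n2:ℝ) ≤ (max (max n1 n2) n3 : ℕ) := by
          exact_mod_cast le_max_of_le_left (le_max_right _ _)
        linarith
      refine le_trans ?_ hn2.le
      rw [one_div]
      rw [inv_le_inv₀]
      · exact h1
      · positivity
      · positivity
    · have : (n3:ℝ) ≤ ((max (max n1 n2) n3 : ℕ) : ℝ) := by exact_mod_cast le_max_right _ _
      show ‖z‖ ≤ _
      linarith
  have hUnion : volume (⋃ n, S n) ≠ 0 := by
    intro h0
    have : volume ({z : Euc N | f z ≠ 0} \ {z : Euc N | z i0 = 0}) = 0 :=
      measure_mono_null hcover h0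
    rw [measure_diff_null hH] at this
    exact hP this
  have : ∃ n, volume (S n) ≠ 0 := by
    by_contra h
    push_neg at h
    exact hUnion (measure_iUnion_null h)
  obtain ⟨n, hn⟩ := this
  refine ⟨S n, hSm n, pos_iff_ne_zero.2 hn, ?_, n, fun z hz => ⟨hz.1, hz.2.1⟩⟩
  have : S n ⊆ Metric.closedBall 0 ((n:ℝ)+1) := by
    intro z hz
    simpa [Metric.mem_closedBall] using hz.2.2
  exact lt_of_le_of_lt (measure_mono this) (measure_closedBall_lt_top)

/-- Poincaré inequality on slabs. -/
theorem poincare_slab {N : ℕ} (hN : 0 < N) (j : Euc N → ℝ≥0∞) (hj : Measurable j)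
    (heven : ∀ z, j (-z) = j z) (hA1 : CondA1 j) (a : ℝ) (ha : 0 < a) :
    ∃ C : ℝ, 0 < C ∧ ∀ Ω : Set (Euc N), IsOpen Ω → Ω ⊆ slab hN a →
      ∀ u : Euc N → ℝ, MemLp u 2 (volume : Measure (Euc N)) → Ej j u < ⊤ →
        (∀ᵐ x : Euc N, x ∉ Ω → u x = 0) →
        ENNReal.ofReal C * l2sq u ≤ Ej j u := by
  obtain ⟨S, hSm, hS0, hSfin, n, hSn⟩ := find_set hN j hj hA1.1
  set δ : ℝ := ((n:ℝ)+1)⁻¹ with hδdef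
  have hδ : 0 < δ := by positivity
  set k : ℕ := ⌈2*a/δ⌉₊ with hkdef
  have hk0 : k ≠ 0 := by
    have : 0 < 2*a/δ := by positivity
    exact (Nat.ceil_pos.2 this).ne'
  have hk : 2*a ≤ k*δ := by
    have := Nat.le_ceil (2*a/δ)
    calc 2*a = (2*a/δ) * δ := by field_simp
    _ ≤ k * δ := by
      apply mul_le_mul_of_nonneg_right _ hδ.le
      exact_mod_cast this
  have hk2ne0 : ((k:ℝ≥0∞))^2 ≠ 0 := by
    simp [pow_eq_zero_iff, hk0]
  have hk2netop : ((k:ℝ≥0∞))^2 ≠ ⊤ := by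
    exact ENNReal.pow_ne_top (ENNReal.natCast_ne_top k)
  set ε : ℝ≥0∞ := ((n : ℝ≥0∞)+1)⁻¹ with hεdef
  have hεne0 : ε ≠ 0 := by
    rw [hεdef]
    exact ENNReal.inv_ne_zero.2 (by
      exact ENNReal.add_ne_top.2 ⟨ENNReal.natCast_ne_top n, ENNReal.one_ne_top⟩)
  have hεnetop : ε ≠ ⊤ := by
    rw [hεdef]
    exact ENNReal.inv_ne_top.2 (by simp)
  set c : ℝ≥0∞ := (1/2 : ℝ≥0∞) * ε * (((k:ℝ≥0∞))^2)⁻¹ * volume S with hcdef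
  have hcne0 : c ≠ 0 := by
    rw [hcdef]
    refine mul_ne_zero (mul_ne_zero (mul_ne_zero ?_ hεne0) ?_) hS0.ne'
    · simp
    · exact ENNReal.inv_ne_zero.2 hk2netop
  have hcnetop : c ≠ ⊤ := by
    rw [hcdef]
    refine ENNReal.mul_ne_top (ENNReal.mul_ne_top (ENNReal.mul_ne_top ?_ hεnetop) ?_) hSfin.ne
    · simp
    · exact ENNReal.inv_ne_top.2 hk2ne0
  refine ⟨c.toReal, ENNReal.toReal_pos hcne0 hcnetop, ?_⟩
  intro Ω hΩopen hΩ u hu hEfin hsupp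
  -- replace u with a measurable representative
  set u' : Euc N → ℝ := (hu.aestronglyMeasurable.mk u) with hu'def
  have hu'm : Measurable u' := hu.aestronglyMeasurable.stronglyMeasurable_mk.measurable
  have hueq : u =ᵐ[volume] u' := hu.aestronglyMeasurable.ae_eq_mk
  have hl2 : l2sq u = l2sq u' := by
    refine lintegral_congr_ae ?_
    filter_upwards [hueq] with x hx
    rw [hx]
  have hEj : Ej j u = Ej j u' := by
    unfold Ej
    congr 1
    refine lintegral_congr_ae ?_
    have h1 : (fun p : Euc N × Euc N => u p.1) =ᵐ[volume.prod volume] fun p => u' p.1 :=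
      MeasureTheory.Measure.quasiMeasurePreserving_fst.ae_eq_comp hueq
    have h2 : (fun p : Euc N × Euc N => u p.2) =ᵐ[volume.prod volume] fun p => u' p.2 :=
      MeasureTheory.Measure.quasiMeasurePreserving_snd.ae_eq_comp hueq
    filter_upwards [h1, h2] with p hp1 hp2
    rw [hp1, hp2]
  have hsupp' : ∀ᵐ x : Euc N, x ∉ Ω → u' x = 0 := by
    filter_upwards [hsupp, hueq] with x h1 h2
    intro hx
    rw [← h2]
    exact h1 hx
  rw [hl2, hEj]
  rw [ENNReal.ofReal_toReal hcnetop]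
  -- main chain
  have hkey : ∀ z ∈ S, (((k:ℝ≥0∞))^2)⁻¹ * l2sq u' * ε ≤
      (∫⁻ x, ENNReal.ofReal ((u' x - u' (x + z))^2)) * j z := by
    intro z hz
    obtain ⟨hjz, hzabs⟩ := hSn z hz
    refine mul_le_mul' ?_ ?_
    · have h1 := key1 hN ha hk hΩ hu'm hsupp' hzabs
      calc (((k:ℝ≥0∞))^2)⁻¹ * l2sq u'
          ≤ (((k:ℝ≥0∞))^2)⁻¹ * ((k:ℝ≥0∞)^2 * ∫⁻ x, ENNReal.ofReal ((u' x - u' (x + z))^2)) :=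
            mul_le_mul' le_rfl h1
        _ = ∫⁻ x, ENNReal.ofReal ((u' x - u' (x + z))^2) := by
            rw [← mul_assoc, ENNReal.inv_mul_cancel hk2ne0 hk2netop, one_mul]
    · exact hjz
  have hchain : c * l2sq u' ≤ Ej j u' := by
    rw [Ej_eq j hj heven u' hu'm]
    have h1 : ∫⁻ z in S, ((((k:ℝ≥0∞))^2)⁻¹ * l2sq u' * ε)
        ≤ ∫⁻ z in S, (∫⁻ x, ENNReal.ofReal ((u' x - u' (x + z))^2)) * j z :=
      setLIntegral_mono' hSm hkey
    have h2 : ∫⁻ z in S, (∫⁻ x, ENNReal.ofReal ((u' x - u' (x + z))^2)) * j z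
        ≤ ∫⁻ z, (∫⁻ x, ENNReal.ofReal ((u' x - u' (x + z))^2)) * j z :=
      lintegral_mono' Measure.restrict_le_self le_rfl
    have h3 : ∫⁻ z in S, ((((k:ℝ≥0∞))^2)⁻¹ * l2sq u' * ε) ∂volume
        = ((((k:ℝ≥0∞))^2)⁻¹ * l2sq u' * ε) * volume S := setLIntegral_const S _
    calc c * l2sq u' = (1/2 : ℝ≥0∞) * (((((k:ℝ≥0∞))^2)⁻¹ * l2sq u' * ε) * volume S) := by
          rw [hcdef]; ring
      _ = (1/2 : ℝ≥0∞) * ∫⁻ z in S, ((((k:ℝ≥0∞))^2)⁻¹ * l2sq u' * ε) ∂volume := by rw [h3]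
      _ ≤ (1/2 : ℝ≥0∞) * ∫⁻ z, (∫⁻ x, ENNReal.ofReal ((u' x - u' (x + z))^2)) * j z :=
          mul_le_mul' le_rfl (h1.trans h2)
  exact hchain
end
end
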